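/- arXiv:2106.03602 — 4 statements merged into one kernel-verified Lean document; each statement's English description precedes it below -/
import Mathlib

section
/- Let (X,d) be a metric space, let A ⊂ X be bounded and such that (A,d) is metric doubling with constant M, let R > 0, and let F = {B(x, r_x)}_{x∈A} be a collection of balls with centers x ∈ A and radii 0 < r_x ≤ R. Then, with N := M⁴, there exist finite or countable subcollections G_1, …, G_N of F, with G_j = {B_{j,l} = B(x_{j,l}, r_{j,l})}_l, such that: (1) A ⊂ ⋃_{j=1}^N ⋃_l B_{j,l}; (2) for every j ∈ {1,…,N} and all indices l ≠ m, x_{j,l} ∉ B_{j,m} and x_{j,m} ∉ B_{j,l}; (3) for every j ∈ {1,…,N} and all indices l ≠ m, B(x_{j,l}, r_{j,l}/2) ∩ B(x_{j,m}, r_{j,m}/2) = ∅. -/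
open MeasureTheory Metric Set Filter ENNReal Topology

noncomputable section

/-- A curve parametrized by arc length: a `1`-Lipschitz map `γ : [0, len] → X` such that
the length (total variation) of `γ` restricted to `[0, t]` equals `t` for every
`t ∈ [0, len]`. -/
structure Curve (X : Type*) [PseudoMetricSpace X] where
  len : ℝ
  len_nonneg : 0 ≤ len
  toFun : ℝ → X
  lip : LipschitzOnWith 1 toFun (Set.Icc 0 len)
  arc : ∀ t ∈ Set.Icc (0 : ℝ) len, eVariationOn toFun (Set.Icc 0 t) = ENNReal.ofReal t

namespace Curve

variable {X : Type*} [PseudoMetricSpace X]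

/-- The image of a curve. -/
def image (γ : Curve X) : Set X :=
  γ.toFun '' Set.Icc 0 γ.len

/-- A curve lies in a set `H` if its image is contained in `H`. -/
def In (γ : Curve X) (H : Set X) : Prop :=
  γ.image ⊆ H

/-- The curve integral `∫_γ g ds := ∫_0^{ℓ_γ} g(γ(s)) ds`. -/
def integral (γ : Curve X) (g : X → ℝ≥0∞) : ℝ≥0∞ :=
  ∫⁻ s in Set.Icc (0 : ℝ) γ.len, g (γ.toFun s)

end Curve

section BasicDefs

variable {X Y : Type*} [PseudoMetricSpace X] [PseudoMetricSpace Y]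

/-- `L_f(x,r) := sup { d_Y(f y, f x) : y ∈ Ω, d(y,x) ≤ r }`. -/
def Lf (Ω : Set X) (f : X → Y) (x : X) (r : ℝ) : ℝ≥0∞ :=
  ⨆ (y : X) (_ : y ∈ Ω ∧ dist y x ≤ r), edist (f y) (f x)

/-- `l_f(x,r) := inf { d_Y(f y, f x) : y ∈ Ω, d(y,x) ≥ r }`. -/
def lf (Ω : Set X) (f : X → Y) (x : X) (r : ℝ) : ℝ≥0∞ :=
  ⨅ (y : X) (_ : y ∈ Ω ∧ r ≤ dist y x), edist (f y) (f x)

/-- `H_f(x,r) := L_f(x,r)/l_f(x,r)`, interpreted as `∞` when `l_f(x,r) = 0`. -/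
def Hfq (Ω : Set X) (f : X → Y) (x : X) (r : ℝ) : ℝ≥0∞ :=
  if lf Ω f x r = 0 then ⊤ else Lf Ω f x r / lf Ω f x r

/-- `h_f(x) := liminf_{r → 0} H_f(x,r)`. -/
def hfq (Ω : Set X) (f : X → Y) (x : X) : ℝ≥0∞ :=
  Filter.liminf (fun r : ℝ => Hfq Ω f x r) (nhdsWithin (0 : ℝ) (Set.Ioi 0))

/-- `h_f^∨(x) := max {h_f(x), 1}`. -/
def hfVee (Ω : Set X) (f : X → Y) (x : X) : ℝ≥0∞ :=
  max (hfq Ω f x) 1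

/-- `(A,d)` is metric doubling with constant `M`: every ball in `A` can be covered by
`M` balls of half the radius (balls in `A` taken with respect to the induced metric). -/
def MetricDoublingOn (A : Set X) (M : ℕ) : Prop :=
  ∀ x ∈ A, ∀ r : ℝ, 0 < r → ∃ s : Finset X, ↑s ⊆ A ∧ s.card ≤ M ∧
    A ∩ ball x r ⊆ ⋃ y ∈ s, ball y (r / 2)

end BasicDefs

section MeasureDefs

variable {X Y : Type*} [PseudoMetricSpace X] [MeasurableSpace X] [PseudoMetricSpace Y]

/-- The measure is finite on balls. -/
def FiniteOnBalls (μ : Measure X) : Prop :=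
  ∀ (x : X) (r : ℝ), μ (ball x r) < ⊤

/-- `μ` is asymptotically doubling in `A`. -/
def AsympDoublingOn (μ : Measure X) (A : Set X) : Prop :=
  ∃ C : ℝ≥0∞, 1 < C ∧ ∀ x ∈ A,
    Filter.limsup (fun r : ℝ => μ (ball x (2 * r)) / μ (ball x r))
      (nhdsWithin (0 : ℝ) (Set.Ioi 0)) < C

/-- The restricted doubled Hausdorff content of codimension 1:
`Ĥ_R(A) := inf { Σ_j μ(B(x_j, 2 r_j))/r_j : A ⊆ ⋃_j B(x_j, r_j), r_j ≤ R }`. -/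
def hatHContent (μ : Measure X) (R : ℝ) (A : Set X) : ℝ≥0∞ :=
  ⨅ (c : ℕ → X) (r : ℕ → ℝ)
    (_ : (∀ j, r j ≤ R) ∧ A ⊆ ⋃ j, ball (c j) (r j)),
    ∑' j, μ (ball (c j) (2 * r j)) / ENNReal.ofReal (r j)

/-- The doubled codimension 1 Hausdorff measure `Ĥ(A) := lim_{R → 0} Ĥ_R(A)`. -/
def hatH (μ : Measure X) (A : Set X) : ℝ≥0∞ :=
  ⨆ (R : ℝ) (_ : 0 < R), hatHContent μ R A

/-- A set `A` is σ-finite with respect to a set function `m`. -/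
def SigmaFiniteSet (m : Set X → ℝ≥0∞) (A : Set X) : Prop :=
  ∃ E : ℕ → Set X, A ⊆ ⋃ i, E i ∧ ∀ i, m (E i) < ⊤

/-- Ahlfors `Q`-regularity with constant `C`. -/
def AhlforsRegular (μ : Measure X) (Q : ℝ) (C : ℝ≥0∞) : Prop :=
  1 ≤ C ∧ ∀ (x : X) (r : ℝ), 0 < r → ENNReal.ofReal r < EMetric.diam (Set.univ : Set X) →
    C⁻¹ * ENNReal.ofReal r ^ Q ≤ μ (ball x r) ∧ μ (ball x r) ≤ C * ENNReal.ofReal r ^ Q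

/-- The 1-modulus of a curve family. -/
def Mod1 (μ : Measure X) (Γ : Set (Curve X)) : ℝ≥0∞ :=
  ⨅ (ρ : X → ℝ≥0∞) (_ : Measurable ρ) (_ : ∀ γ ∈ Γ, 1 ≤ γ.integral ρ),
    ∫⁻ x, ρ x ∂μ

/-- The AM-modulus of a curve family. -/
def AMmod (μ : Measure X) (Γ : Set (Curve X)) : ℝ≥0∞ :=
  ⨅ (ρ : ℕ → X → ℝ≥0∞) (_ : ∀ i, Measurable (ρ i))
    (_ : ∀ γ ∈ Γ, 1 ≤ Filter.liminf (fun i => γ.integral (ρ i)) Filter.atTop),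
    Filter.liminf (fun i => ∫⁻ x, ρ i x ∂μ) Filter.atTop

/-- `g` is a 1-weak upper gradient of `f` in `H`: the upper gradient inequality holds
for 1-a.e. curve in `H`. -/
def IsWeakUpperGradientOn (μ : Measure X) (H : Set X) (f : X → Y) (g : X → ℝ≥0∞) : Prop :=
  Mod1 μ {γ : Curve X | γ.In H ∧
    ¬ edist (f (γ.toFun 0)) (f (γ.toFun γ.len)) ≤ γ.integral g} = 0

/-- The Dirichlet class `D¹(H; Y)`: `f` has a 1-weak upper gradient in `L¹(H, μ)`. -/
def MemDirichlet (μ : Measure X) (H : Set X) (f : X → Y) : Prop :=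
  ∃ g : X → ℝ≥0∞, Measurable g ∧ IsWeakUpperGradientOn μ H f g ∧ ∫⁻ x in H, g x ∂μ < ⊤

/-- The class `D^{BV}(Ω; Y)`. -/
def MemDBV (μ : Measure X) (Ω : Set X) (f : X → Y) : Prop :=
  ∃ g : ℕ → X → ℝ≥0∞, (∀ i, Measurable (g i)) ∧
    (∃ C : ℝ≥0∞, C < ⊤ ∧ ∀ i, ∫⁻ x in Ω, g i x ∂μ ≤ C) ∧
    AMmod μ {γ : Curve X | γ.In Ω ∧
      ¬ edist (f (γ.toFun 0)) (f (γ.toFun γ.len)) ≤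
        Filter.liminf (fun i => γ.integral (g i)) Filter.atTop} = 0

end MeasureDefs

section Helpers

lemma my_exists_div_pow_lt (b c : ℝ) (hb : 0 < b) (hc : 0 < c) : ∃ n : ℕ, b / 2 ^ n < c := by
  obtain ⟨n, hn⟩ := exists_pow_lt_of_lt_one (div_pos hc hb) (by norm_num : (1:ℝ)/2 < 1)
  refine ⟨n, ?_⟩
  have h2 : ((1:ℝ)/2) ^ n = 1 / 2 ^ n := by rw [div_pow, one_pow]
  rw [h2] at hn
  have h3 : b * (1 / 2 ^ n) < b * (c / b) := mul_lt_mul_of_pos_left hn hb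
  have h4 : b * (c / b) = c := by field_simp
  have h5 : b * (1 / 2 ^ n) = b / 2 ^ n := by ring
  linarith [h3, h4.le]

lemma my_exists_layer (R v : ℝ) (hR : 0 < R) (h1 : 0 < v) (h2 : v ≤ R) :
    ∃ k : ℕ, R / 2 ^ (k + 1) < v ∧ v ≤ R / 2 ^ k := by
  classical
  have hex : ∃ m : ℕ, R / 2 ^ (m + 1) < v := by
    obtain ⟨n, hn⟩ := my_exists_div_pow_lt R v hR h1
    refine ⟨n, lt_of_le_of_lt ?_ hn⟩
    exact div_le_div_of_nonneg_left hR.le (by positivity) (by norm_num [pow_succ])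
  refine ⟨Nat.find hex, Nat.find_spec hex, ?_⟩
  rcases Nat.eq_zero_or_eq_succ_pred (Nat.find hex) with h0 | hs
  · rw [h0]; simpa using h2
  · have hlt : Nat.find hex - 1 < Nat.find hex := by omega
    have hnot := Nat.find_min hex hlt
    push_neg at hnot
    have heq : Nat.find hex - 1 + 1 = Nat.find hex := by omega
    rwa [heq] at hnot

lemma my_exists_coloring {α : Type*} (adj : α → α → Prop) (hsym : ∀ a b, adj a b → adj b a)
    (n : ℕ) (hn : 0 < n) :
    ∀ s : Finset α, (∀ x ∈ s, ∃ t : Finset α, t.card < n ∧ ∀ y ∈ s, y ≠ x → adj x y → y ∈ t) →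
    ∃ c : α → Fin n, ∀ x ∈ s, ∀ y ∈ s, x ≠ y → adj x y → c x ≠ c y := by
  classical
  intro s
  induction s using Finset.strongInduction with
  | _ s ih =>
    intro hdeg
    rcases s.eq_empty_or_nonempty with rfl | ⟨x, hx⟩
    · exact ⟨fun _ => ⟨0, hn⟩, by simp⟩
    · obtain ⟨c', hc'⟩ := ih (s.erase x) (Finset.erase_ssubset hx) (fun y hy => by
        obtain ⟨t, ht1, ht2⟩ := hdeg y (Finset.mem_of_mem_erase hy)
        exact ⟨t, ht1, fun z hz => ht2 z (Finset.mem_of_mem_erase hz)⟩)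
      obtain ⟨t, htcard, htmem⟩ := hdeg x hx
      have hne : ∃ j : Fin n, j ∉ t.image c' := by
        by_contra h
        push_neg at h
        have h1 : (Finset.univ : Finset (Fin n)).card ≤ (t.image c').card :=
          Finset.card_le_card (fun j _ => h j)
        have h2 : (t.image c').card ≤ t.card := Finset.card_image_le
        simp [Finset.card_univ] at h1
        omega
      obtain ⟨j, hj⟩ := hne
      refine ⟨Function.update c' x j, ?_⟩
      intro a ha b hb hab hadj
      by_cases hax : a = x
      · subst hax
        have hbx : b ≠ a := hab.symm
        rw [Function.update_self, Function.update_of_ne hbx]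
        intro hcontra
        exact hj (hcontra ▸ Finset.mem_image_of_mem c' (htmem b hb hbx hadj))
      · by_cases hbx : b = x
        · subst hbx
          rw [Function.update_self, Function.update_of_ne hax]
          intro hcontra
          exact hj (hcontra ▸ Finset.mem_image_of_mem c' (htmem a ha hax (hsym a b hadj)))
        · rw [Function.update_of_ne hax, Function.update_of_ne hbx]
          exact hc' a (Finset.mem_erase.2 ⟨hax, ha⟩) b (Finset.mem_erase.2 ⟨hbx, hb⟩) hab hadj

lemma my_card_le_of_sep {X : Type*} [MetricSpace X] (T Q : Finset X) (ε : ℝ)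
    (hcov : ∀ x ∈ T, ∃ w ∈ Q, dist x w < ε)
    (hsep : ∀ x ∈ T, ∀ y ∈ T, x ≠ y → 2 * ε ≤ dist x y) : T.card ≤ Q.card := by
  classical
  have h : ∀ x : X, ∃ w : X, x ∈ T → (w ∈ Q ∧ dist x w < ε) := by
    intro x
    by_cases hx : x ∈ T
    · obtain ⟨w, hw1, hw2⟩ := hcov x hx
      exact ⟨w, fun _ => ⟨hw1, hw2⟩⟩
    · exact ⟨x, fun h => absurd h hx⟩
  choose f hf using h
  apply Finset.card_le_card_of_injOn f (fun a ha => (hf a ha).1)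
  intro a ha b hb hfe
  by_contra hne
  have h1 := (hf a (by exact_mod_cast ha)).2
  have h2 := (hf b (by exact_mod_cast hb)).2
  have h3 := dist_triangle a (f a) b
  have h7 : dist (f a) b = dist b (f b) := by rw [hfe, dist_comm]
  have h5 := hsep a (by exact_mod_cast ha) b (by exact_mod_cast hb) hne
  linarith

lemma my_maxsep {X : Type*} [MetricSpace X] (r : X → ℝ) (U : Set X) :
    ∃ D : Set X, D ⊆ U ∧ (∀ x ∈ D, ∀ y ∈ D, x ≠ y → min (r x) (r y) ≤ dist x y) ∧
      ∀ a ∈ U, a ∉ D → ∃ x ∈ D, dist a x < min (r a) (r x) := by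
  classical
  set S : Set (Set X) := {t | t ⊆ U ∧ ∀ x ∈ t, ∀ y ∈ t, x ≠ y → min (r x) (r y) ≤ dist x y}
    with hS
  obtain ⟨D, hD⟩ := zorn_subset S (by
    intro c hcS hchain
    rcases c.eq_empty_or_nonempty with rfl | hcne
    · exact ⟨∅, ⟨empty_subset U, by simp⟩, by simp⟩
    · refine ⟨⋃₀ c, ⟨?_, ?_⟩, fun s hs => subset_sUnion_of_mem hs⟩
      · exact sUnion_subset fun t ht => (hcS ht).1
      · intro x hx y hy hxy
        obtain ⟨t1, ht1, hxt1⟩ := hx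
        obtain ⟨t2, ht2, hyt2⟩ := hy
        rcases hchain.total ht1 ht2 with h | h
        · exact (hcS ht2).2 x (h hxt1) y hyt2 hxy
        · exact (hcS ht1).2 x hxt1 y (h hyt2) hxy)
  refine ⟨D, hD.1.1, hD.1.2, ?_⟩
  intro a haU haD
  by_contra hcon
  push_neg at hcon
  have hins : insert a D ∈ S := by
    constructor
    · exact insert_subset haU hD.1.1
    · intro x hx y hy hxy
      rcases hx with rfl | hx
      · rcases hy with rfl | hy
        · exact absurd rfl hxy
        · exact hcon y hy
      · rcases hy with rfl | hy
        · rw [min_comm, dist_comm]; exact hcon x hx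
        · exact hD.1.2 x hx y hy hxy
  exact haD (hD.2 hins (subset_insert a D) (mem_insert a D))

end Helpers

/-- Lemma 3.1 (Besicovitch-type covering lemma): from a collection of balls with centers
in a bounded metric doubling set `A` and radii at most `R`, one can extract `N = M⁴`
countable subcollections covering `A`, in each of which the centers are separated and
the half-radius balls are pairwise disjoint. -/
theorem covering_lemma
    {X : Type*} [MetricSpace X]
    (A : Set X) (hAbdd : Bornology.IsBounded A)
    (M : ℕ) (hdbl : MetricDoublingOn A M)
    (R : ℝ) (hR : 0 < R)
    (r : X → ℝ) (hr : ∀ x ∈ A, 0 < r x ∧ r x ≤ R) :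
    ∃ S : Fin (M ^ 4) → Set X,
      (∀ j, S j ⊆ A) ∧
      (∀ j, (S j).Countable) ∧
      (A ⊆ ⋃ j, ⋃ x ∈ S j, ball x (r x)) ∧
      (∀ j, ∀ x ∈ S j, ∀ y ∈ S j, x ≠ y →
        x ∉ ball y (r y) ∧ y ∉ ball x (r x) ∧
        ball x (r x / 2) ∩ ball y (r y / 2) = ∅) := by
  classical
  by_cases hAe : A = ∅
  · refine ⟨fun _ => ∅, fun j => empty_subset A, fun j => countable_empty, ?_, ?_⟩
    · rw [hAe]; exact empty_subset _
    · intro j x hx; exact absurd hx (Set.notMem_empty x)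
  obtain ⟨a0, ha0⟩ := Set.nonempty_iff_ne_empty.2 hAe
  have hM : 1 ≤ M := by
    obtain ⟨s, hsA, hscard, hscov⟩ := hdbl a0 ha0 1 one_pos
    have h1 : a0 ∈ ⋃ y ∈ s, ball y (1 / 2) := hscov ⟨ha0, mem_ball_self one_pos⟩
    simp only [mem_iUnion] at h1
    obtain ⟨y, hy, -⟩ := h1
    exact le_trans (Finset.card_pos.2 ⟨y, hy⟩) hscard
  have hM0 : 0 < M := hM
  have hN : 0 < M ^ 4 := pow_pos hM0 4
  have hM24 : M ^ 2 ≤ M ^ 4 := Nat.pow_le_pow_right hM0 (by omega)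
  -- total doubling function
  have hd' : ∀ (x : X) (ρ : ℝ), ∃ s : Finset X, x ∈ A → 0 < ρ →
      (↑s ⊆ A ∧ s.card ≤ M ∧ A ∩ ball x ρ ⊆ ⋃ y ∈ s, ball y (ρ / 2)) := by
    intro x ρ
    by_cases h : x ∈ A ∧ 0 < ρ
    · obtain ⟨s, hs⟩ := hdbl x h.1 ρ h.2
      exact ⟨s, fun _ _ => hs⟩
    · exact ⟨∅, fun hx hρ => absurd ⟨hx, hρ⟩ h⟩
  choose db hdb using hd'
  -- A is contained in a ball
  obtain ⟨rr, hrr⟩ := hAbdd.subset_closedBall a0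
  set ρ0 : ℝ := max rr 0 + 1 with hρ0def
  have hρ0 : 0 < ρ0 := by positivity
  have hAρ : A ⊆ ball a0 ρ0 := by
    intro x hx
    have h1 : dist x a0 ≤ rr := mem_closedBall.1 (hrr hx)
    have h2 : rr ≤ max rr 0 := le_max_left _ _
    rw [mem_ball]
    rw [hρ0def]
    linarith
  -- total boundedness
  have tbn : ∀ n : ℕ, ∃ s : Finset X, ↑s ⊆ A ∧ A ⊆ ⋃ y ∈ s, ball y (ρ0 / 2 ^ n) := by
    intro n
    induction n with
    | zero =>
      refine ⟨{a0}, by simpa using ha0, ?_⟩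
      intro x hx
      simp only [Finset.mem_singleton, mem_iUnion]
      exact ⟨a0, rfl, by simpa using hAρ hx⟩
    | succ n ih =>
      obtain ⟨s, hsA, hcov⟩ := ih
      have hpos : 0 < ρ0 / 2 ^ n := div_pos hρ0 (by positivity)
      refine ⟨s.biUnion (fun y => db y (ρ0 / 2 ^ n)), ?_, ?_⟩
      · intro w hw
        simp only [Finset.coe_biUnion, mem_iUnion, Finset.mem_coe] at hw
        obtain ⟨y, hy, hw⟩ := hw
        exact (hdb y (ρ0 / 2 ^ n) (hsA hy) hpos).1 hw
      · intro a ha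
        have h1 := hcov ha
        simp only [mem_iUnion] at h1
        obtain ⟨y, hy, hball⟩ := h1
        have h2 := (hdb y (ρ0 / 2 ^ n) (hsA hy) hpos).2.2 ⟨ha, hball⟩
        simp only [mem_iUnion] at h2
        obtain ⟨w, hw, hball2⟩ := h2
        have he : ρ0 / 2 ^ n / 2 = ρ0 / 2 ^ (n + 1) := by rw [div_div, ← pow_succ]
        simp only [mem_iUnion]
        exact ⟨w, Finset.mem_biUnion.2 ⟨y, hy, hw⟩, he ▸ hball2⟩
  have tb : ∀ ε : ℝ, 0 < ε → ∃ s : Finset X, ↑s ⊆ A ∧ A ⊆ ⋃ y ∈ s, ball y ε := by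
    intro ε hε
    obtain ⟨n, hn⟩ := my_exists_div_pow_lt ρ0 ε hρ0 hε
    obtain ⟨s, hsA, hcov⟩ := tbn n
    exact ⟨s, hsA, hcov.trans (iUnion₂_mono fun y _ => ball_subset_ball hn.le)⟩
  -- separated subsets of A are finite
  have sepFin : ∀ (E : Set X) (δ : ℝ), 0 < δ → E ⊆ A →
      (∀ x ∈ E, ∀ y ∈ E, x ≠ y → δ ≤ dist x y) → E.Finite := by
    intro E δ hδ hEA hsep
    obtain ⟨s, hsA, hcov⟩ := tb (δ / 2) (by linarith)
    have hsub : E ⊆ ⋃ y ∈ s, (E ∩ ball y (δ / 2)) := by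
      intro x hx
      have h1 := hcov (hEA hx)
      simp only [mem_iUnion] at h1 ⊢
      obtain ⟨y, hy, hb⟩ := h1
      exact ⟨y, hy, hx, hb⟩
    refine Set.Finite.subset ?_ hsub
    refine Set.Finite.biUnion (s.finite_toSet) ?_
    intro y _
    apply Set.Subsingleton.finite
    intro u hu v hv
    by_contra hne
    have h1 := hsep u hu.1 v hv.1 hne
    have h2 : dist u y < δ / 2 := mem_ball.1 hu.2
    have h3 : dist v y < δ / 2 := mem_ball.1 hv.2
    have h4 := dist_triangle u y v
    have h5 : dist y v = dist v y := dist_comm _ _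
    linarith
  -- layers
  set lay : ℕ → Set X := fun k => {x | x ∈ A ∧ R / 2 ^ (k + 1) < r x ∧ r x ≤ R / 2 ^ k}
    with hlaydef
  have hlaymem : ∀ k (x : X), x ∈ lay k → x ∈ A ∧ R / 2 ^ (k + 1) < r x ∧ r x ≤ R / 2 ^ k :=
    fun k x h => h
  -- maximal separated subsets
  choose Dm hDm1 hDm2 hDm3 using my_maxsep r
  -- the covering construction
  obtain ⟨cov, D, cov0, hDdef, covsucc⟩ :
      ∃ (cov : ℕ → Set X) (D : ℕ → Set X), cov 0 = ∅ ∧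
        (∀ k, D k = Dm (lay k \ cov k)) ∧
        (∀ k, cov (k + 1) = cov k ∪ ⋃ x ∈ D k, ball x (r x)) := by
    refine ⟨fun k => Nat.rec ∅ (fun k c => c ∪ ⋃ x ∈ Dm (lay k \ c), ball x (r x)) k,
      fun k => Dm (lay k \ Nat.rec ∅ (fun k c => c ∪ ⋃ x ∈ Dm (lay k \ c), ball x (r x)) k),
      rfl, fun k => rfl, fun k => rfl⟩
  have hDsub : ∀ k, D k ⊆ lay k \ cov k := by
    intro k; rw [hDdef k]; exact hDm1 _
  have hDsep : ∀ k, ∀ x ∈ D k, ∀ y ∈ D k, x ≠ y → min (r x) (r y) ≤ dist x y := by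
    intro k; rw [hDdef k]; exact hDm2 _
  have hDmax : ∀ k, ∀ a ∈ lay k \ cov k, a ∉ D k → ∃ x ∈ D k, dist a x < min (r a) (r x) := by
    intro k; rw [hDdef k]; exact hDm3 _
  have hDlay : ∀ k, D k ⊆ lay k := fun k => (hDsub k).trans diff_subset
  have hDA : ∀ k, D k ⊆ A := fun k x hx => (hlaymem k x (hDlay k hx)).1
  have hDsep' : ∀ k, ∀ x ∈ D k, ∀ y ∈ D k, x ≠ y → R / 2 ^ (k + 1) ≤ dist x y := by
    intro k x hx y hy hxy
    have h1 := hDsep k x hx y hy hxy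
    have h2 := (hlaymem k x (hDlay k hx)).2.1
    have h3 := (hlaymem k y (hDlay k hy)).2.1
    have h4 : R / 2 ^ (k + 1) ≤ min (r x) (r y) := le_min h2.le h3.le
    linarith
  have hDfin : ∀ k, (D k).Finite := fun k =>
    sepFin (D k) (R / 2 ^ (k + 1)) (div_pos hR (by positivity)) (hDA k) (hDsep' k)
  have covmono : ∀ k i, i ≤ k → cov i ⊆ cov k := by
    intro k
    induction k with
    | zero => intro i hi; obtain rfl := Nat.le_zero.1 hi; exact subset_rfl
    | succ k ih =>
      intro i hi
      rcases Nat.lt_or_ge i (k + 1) with h | h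
      · refine (ih i (by omega)).trans ?_
        rw [covsucc]; exact subset_union_left
      · obtain rfl : i = k + 1 := le_antisymm hi h
        exact subset_rfl
  have hcovU : ∀ k, cov k ⊆ ⋃ i, ⋃ x ∈ D i, ball x (r x) := by
    intro k
    induction k with
    | zero => rw [cov0]; exact empty_subset _
    | succ k ih =>
      rw [covsucc]
      exact union_subset ih (subset_iUnion_of_subset k subset_rfl)
  -- cross-layer separation
  have cross : ∀ i k, i < k → ∀ x ∈ D i, ∀ y ∈ D k, max (r x) (r y) ≤ dist x y := by
    intro i k hik x hx y hy
    have hyc : y ∉ cov k := ((hDsub k) hy).2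
    have hball : ball x (r x) ⊆ cov k := by
      have h1 : ball x (r x) ⊆ cov (i + 1) := by
        rw [covsucc]
        exact (Set.subset_biUnion_of_mem (u := fun w => ball w (r w)) hx).trans subset_union_right
      exact h1.trans (covmono k (i + 1) hik)
    have h2 : y ∉ ball x (r x) := fun h => hyc (hball h)
    rw [mem_ball, not_lt] at h2
    rw [dist_comm] at h2
    have h3 : r y ≤ r x := by
      have hy2 := (hlaymem k y (hDlay k hy)).2.2
      have hx2 := (hlaymem i x (hDlay i hx)).2.1
      have h4 : R / 2 ^ k ≤ R / 2 ^ (i + 1) :=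
        div_le_div_of_nonneg_left hR.le (by positivity)
          (pow_le_pow_right₀ one_le_two hik)
      linarith
    exact max_le h2 (h3.trans h2)
  -- coloring per layer
  have hadjsymm : ∀ a b : X, dist a b < max (r a) (r b) → dist b a < max (r b) (r a) :=
    fun a b h => by rwa [dist_comm, max_comm]
  have hcolor : ∀ k, ∃ c : X → Fin (M ^ 4),
      ∀ x ∈ D k, ∀ y ∈ D k, x ≠ y → dist x y < max (r x) (r y) → c x ≠ c y := by
    intro k
    have hdeg : ∀ y ∈ (hDfin k).toFinset, ∃ t : Finset X, t.card < M ^ 4 ∧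
        ∀ z ∈ (hDfin k).toFinset, z ≠ y → dist y z < max (r y) (r z) → z ∈ t := by
      intro y hy
      rw [Set.Finite.mem_toFinset] at hy
      have hyA : y ∈ A := hDA k hy
      have hrk : 0 < R / 2 ^ k := div_pos hR (by positivity)
      have hrk1 : 0 < R / 2 ^ (k + 1) := div_pos hR (by positivity)
      have hs1 := hdb y (R / 2 ^ k) hyA hrk
      set Q : Finset X := (db y (R / 2 ^ k)).biUnion (fun z => db z (R / 2 ^ (k + 1))) with hQ
      have hQcard : Q.card ≤ M ^ 2 := by
        have h1 : Q.card ≤ ∑ z ∈ db y (R / 2 ^ k), (db z (R / 2 ^ (k + 1))).card :=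
          Finset.card_biUnion_le
        have h2 : ∑ z ∈ db y (R / 2 ^ k), (db z (R / 2 ^ (k + 1))).card ≤
            (db y (R / 2 ^ k)).card * M := by
          rw [← smul_eq_mul]
          exact Finset.sum_le_card_nsmul _ _ M
            (fun z hz => (hdb z (R / 2 ^ (k + 1)) (hs1.1 hz) hrk1).2.1)
        have h3 : (db y (R / 2 ^ k)).card * M ≤ M * M :=
          Nat.mul_le_mul_right M hs1.2.1
        calc Q.card ≤ M * M := le_trans h1 (le_trans h2 h3)
        _ = M ^ 2 := (sq M).symm
      have hTfinite : (insert y {x | x ∈ D k ∧ x ≠ y ∧ dist y x < max (r y) (r x)}).Finite :=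
        Set.Finite.insert y ((hDfin k).subset (fun x hx => hx.1))
      have hTsub : (insert y {x | x ∈ D k ∧ x ≠ y ∧ dist y x < max (r y) (r x)}) ⊆
          A ∩ ball y (R / 2 ^ k) := by
        intro x hx
        rcases hx with rfl | hx
        · exact ⟨hyA, mem_ball_self hrk⟩
        · obtain ⟨hxD, hxy, hxadj⟩ := hx
          refine ⟨hDA k hxD, ?_⟩
          rw [mem_ball, dist_comm]
          have h2 := (hlaymem k y (hDlay k hy)).2.2
          have h3 := (hlaymem k x (hDlay k hxD)).2.2
          calc dist y x < max (r y) (r x) := hxadj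
          _ ≤ R / 2 ^ k := max_le h2 h3
      have hcovT : ∀ x ∈ hTfinite.toFinset, ∃ w ∈ Q, dist x w < R / 2 ^ (k + 2) := by
        intro x hx
        rw [Set.Finite.mem_toFinset] at hx
        have h1 := hs1.2.2 (hTsub hx)
        simp only [mem_iUnion] at h1
        obtain ⟨z, hz, hb⟩ := h1
        have he1 : R / 2 ^ k / 2 = R / 2 ^ (k + 1) := by rw [div_div, ← pow_succ]
        rw [he1] at hb
        have h2 := (hdb z (R / 2 ^ (k + 1)) (hs1.1 hz) hrk1).2.2 ⟨(hTsub hx).1, hb⟩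
        simp only [mem_iUnion] at h2
        obtain ⟨w, hw, hb2⟩ := h2
        have he2 : R / 2 ^ (k + 1) / 2 = R / 2 ^ (k + 2) := by rw [div_div, ← pow_succ]
        rw [he2, mem_ball] at hb2
        exact ⟨w, Finset.mem_biUnion.2 ⟨z, hz, hw⟩, hb2⟩
      have hsepT : ∀ u ∈ hTfinite.toFinset, ∀ v ∈ hTfinite.toFinset, u ≠ v →
          2 * (R / 2 ^ (k + 2)) ≤ dist u v := by
        intro u hu v hv huv
        rw [Set.Finite.mem_toFinset] at hu hv
        have he : 2 * (R / 2 ^ (k + 2)) = R / 2 ^ (k + 1) := by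
          rw [pow_succ, ← div_div]; ring
        rw [he]
        have huD : u ∈ D k := by rcases hu with rfl | hu; exacts [hy, hu.1]
        have hvD : v ∈ D k := by rcases hv with rfl | hv; exacts [hy, hv.1]
        exact hDsep' k u huD v hvD huv
      have hcard : hTfinite.toFinset.card ≤ M ^ 2 :=
        le_trans (my_card_le_of_sep hTfinite.toFinset Q (R / 2 ^ (k + 2)) hcovT hsepT) hQcard
      refine ⟨hTfinite.toFinset.erase y, ?_, ?_⟩
      · have hyT : y ∈ hTfinite.toFinset := by
          rw [Set.Finite.mem_toFinset]; exact Set.mem_insert y _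
        have h1 := Finset.card_erase_lt_of_mem hyT
        omega
      · intro z hz hzy hadjz
        rw [Finset.mem_erase]
        refine ⟨hzy, ?_⟩
        rw [Set.Finite.mem_toFinset] at hz ⊢
        exact Set.mem_insert_of_mem y ⟨hz, hzy, hadjz⟩
    obtain ⟨c, hc⟩ := my_exists_coloring (fun a b => dist a b < max (r a) (r b)) hadjsymm
      (M ^ 4) hN (hDfin k).toFinset hdeg
    exact ⟨c, fun x hx y hy =>
      hc x ((hDfin k).mem_toFinset.2 hx) y ((hDfin k).mem_toFinset.2 hy)⟩
  choose col hcol using hcolor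
  refine ⟨fun j => {x | ∃ k, x ∈ D k ∧ col k x = j}, ?_, ?_, ?_, ?_⟩
  · rintro j x ⟨k, hk, -⟩; exact hDA k hk
  · intro j
    have h1 : {x | ∃ k, x ∈ D k ∧ col k x = j} ⊆ ⋃ k, D k := by
      rintro x ⟨k, hk, -⟩; exact mem_iUnion.2 ⟨k, hk⟩
    exact Set.Countable.mono h1 (countable_iUnion (fun k => (hDfin k).countable))
  · intro a ha
    obtain ⟨k, hk1, hk2⟩ := my_exists_layer R (r a) hR (hr a ha).1 (hr a ha).2
    have halay : a ∈ lay k := ⟨ha, hk1, hk2⟩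
    have hstep : ∃ i, ∃ x ∈ D i, a ∈ ball x (r x) := by
      by_cases hc : a ∈ cov k
      · have h1 := hcovU k hc
        simp only [mem_iUnion] at h1
        obtain ⟨i, x, hx, hb⟩ := h1
        exact ⟨i, x, hx, hb⟩
      · by_cases hD' : a ∈ D k
        · exact ⟨k, a, hD', mem_ball_self (hr a ha).1⟩
        · obtain ⟨x, hx, hlt⟩ := hDmax k a ⟨halay, hc⟩ hD'
          exact ⟨k, x, hx, mem_ball.2 (lt_of_lt_of_le hlt (min_le_right _ _))⟩
    obtain ⟨i, x, hx, hb⟩ := hstep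
    simp only [mem_iUnion]
    exact ⟨col i x, x, ⟨i, hx, rfl⟩, hb⟩
  · rintro j x ⟨k, hxk, hcx⟩ y ⟨k', hyk, hcy⟩ hxy
    have hdist : max (r x) (r y) ≤ dist x y := by
      rcases lt_trichotomy k k' with h | rfl | h
      · exact cross k k' h x hxk y hyk
      · by_cases hadj : dist x y < max (r x) (r y)
        · exact absurd (hcx.trans hcy.symm) (hcol k x hxk y hyk hxy hadj)
        · exact not_lt.1 hadj
      · have h1 := cross k' k h y hyk x hxk
        rwa [max_comm, dist_comm] at h1
    have hxb : x ∉ ball y (r y) := by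
      intro hmem
      rw [mem_ball] at hmem
      have h1 := le_max_right (r x) (r y)
      linarith
    have hyb : y ∉ ball x (r x) := by
      intro hmem
      rw [mem_ball, dist_comm] at hmem
      have h1 := le_max_left (r x) (r y)
      linarith
    refine ⟨hxb, hyb, ?_⟩
    rw [Set.eq_empty_iff_forall_notMem]
    rintro z ⟨hz1, hz2⟩
    rw [mem_ball] at hz1 hz2
    have ht := dist_triangle x z y
    have hc1 : dist x z = dist z x := dist_comm _ _
    have h1 := le_max_left (r x) (r y)
    have h2 := le_max_right (r x) (r y)
    linarith
end
end

section
/- Let (X,d) and (Y,d_Y) be metric spaces. Consider a collection of balls {B_l = B(x_l, r_l)}_{l=1}^∞ in X such that for all l ≠ m one has x_l ∉ B_m and x_m ∉ B_l. Let f : X → Y be an injection such that for every l ∈ ℕ there is H_l ≥ 1 with B(f(x_l), L_f(x_l, r_l)/H_l) ⊂ f(B_l). Then the balls B(f(x_l), L_f(x_l, r_l)/(2 H_l)), l ∈ ℕ, are pairwise disjoint, i.e. B(f(x_l), L_f(x_l,r_l)/(2H_l)) ∩ B(f(x_m), L_f(x_m,r_m)/(2H_m)) = ∅ for all l ≠ m.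 -/
open MeasureTheory Metric Set Filter ENNReal Topology

noncomputable section

/-- Lemma 3.2: if the centers of the balls `B_l` are separated (no center lies in another
ball), `f` is injective, and `B(f(x_l), L_f(x_l,r_l)/H_l) ⊆ f(B_l)` for every `l`, then
the balls `B(f(x_l), L_f(x_l,r_l)/(2H_l))` are pairwise disjoint. -/
theorem disjoint_images
    {X Y : Type*} [MetricSpace X] [MetricSpace Y]
    (x : ℕ → X) (r : ℕ → ℝ)
    (hsep : ∀ l m : ℕ, l ≠ m → x l ∉ ball (x m) (r m) ∧ x m ∉ ball (x l) (r l))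
    (f : X → Y) (hinj : Function.Injective f)
    (H : ℕ → ℝ) (hH : ∀ l, 1 ≤ H l)
    (hball : ∀ l, EMetric.ball (f (x l))
        (Lf Set.univ f (x l) (r l) / ENNReal.ofReal (H l)) ⊆ f '' ball (x l) (r l)) :
    ∀ l m : ℕ, l ≠ m →
      EMetric.ball (f (x l)) (Lf Set.univ f (x l) (r l) / ENNReal.ofReal (2 * H l)) ∩
        EMetric.ball (f (x m)) (Lf Set.univ f (x m) (r m) / ENNReal.ofReal (2 * H m)) = ∅ := by
  have hhalf : ∀ n : ℕ, Lf Set.univ f (x n) (r n) / ENNReal.ofReal (2 * H n)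
      = (Lf Set.univ f (x n) (r n) / ENNReal.ofReal (H n)) / 2 := by
    intro n
    rw [ENNReal.ofReal_mul (by norm_num : (0:ℝ) ≤ 2), ENNReal.ofReal_ofNat,
      div_eq_mul_inv, div_eq_mul_inv, div_eq_mul_inv,
      ENNReal.mul_inv (Or.inl (by norm_num)) (Or.inl (by norm_num)), mul_comm (2:ℝ≥0∞)⁻¹,
      mul_assoc]
  have key : ∀ l m : ℕ, l ≠ m →
      Lf Set.univ f (x l) (r l) / ENNReal.ofReal (H l) ≤
      Lf Set.univ f (x m) (r m) / ENNReal.ofReal (H m) →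
      EMetric.ball (f (x l)) (Lf Set.univ f (x l) (r l) / ENNReal.ofReal (2 * H l)) ∩
        EMetric.ball (f (x m)) (Lf Set.univ f (x m) (r m) / ENNReal.ofReal (2 * H m)) = ∅ := by
    intro l m hne hle
    rw [Set.eq_empty_iff_forall_notMem]
    rintro z ⟨hzl, hzm⟩
    rw [EMetric.ball, EMetric.mem_ball, hhalf] at hzl hzm
    set A := Lf Set.univ f (x l) (r l) / ENNReal.ofReal (H l) with hA
    set B := Lf Set.univ f (x m) (r m) / ENNReal.ofReal (H m) with hB
    have htri : edist (f (x l)) (f (x m)) < B := by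
      calc edist (f (x l)) (f (x m)) ≤ edist (f (x l)) z + edist z (f (x m)) :=
            edist_triangle _ _ _
        _ < A / 2 + B / 2 := by
            refine ENNReal.add_lt_add ?_ hzm
            rwa [edist_comm]
        _ ≤ B / 2 + B / 2 := by gcongr
        _ = B := ENNReal.add_halves B
    have hmem : f (x l) ∈ f '' ball (x m) (r m) := hball m htri
    obtain ⟨y, hy, hfy⟩ := hmem
    exact (hsep l m hne).1 (hinj hfy ▸ hy)
  intro l m hne
  rcases le_total (Lf Set.univ f (x l) (r l) / ENNReal.ofReal (H l))
      (Lf Set.univ f (x m) (r m) / ENNReal.ofReal (H m)) with h | h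
  · exact key l m hne h
  · rw [Set.inter_comm]; exact key m l (Ne.symm hne) h
end
end

section
/- Let (X,d,μ) and (Y,d_Y,ν) be metric measure spaces, let H ⊂ X, and let f : H → Y be continuous. Suppose E ⊂ H has σ-finite Ĥ-measure. Then Mod₁(Γ) = 0 for the curve family Γ := { curves γ in H : H¹(f(γ ∩ E)) > 0 }, where γ ∩ E denotes the intersection of the image of γ with E. -/
open MeasureTheory Metric Set Filter ENNReal Topology

noncomputable section

set_option linter.unusedSectionVars false
set_option linter.unusedVariables false

section AuxContent

variable {X : Type*} [MetricSpace X] [MeasurableSpace X] [BorelSpace X]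
variable {μ : MeasureTheory.Measure X}

lemma hatHContent_le_of_cover {R : ℝ} {A : Set X} (c : ℕ → X) (r : ℕ → ℝ)
    (h1 : ∀ j, r j ≤ R) (h2 : A ⊆ ⋃ j, ball (c j) (r j)) :
    hatHContent μ R A ≤ ∑' j, μ (ball (c j) (2 * r j)) / ENNReal.ofReal (r j) := by
  refine iInf_le_of_le c (iInf_le_of_le r ?_)
  exact iInf_le_of_le ⟨h1, h2⟩ le_rfl

lemma exists_cover_of_content_lt {R : ℝ} {A : Set X} {b : ℝ≥0∞}
    (h : hatHContent μ R A < b) :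
    ∃ (c : ℕ → X) (r : ℕ → ℝ), (∀ j, r j ≤ R) ∧ A ⊆ ⋃ j, ball (c j) (r j) ∧
      ∑' j, μ (ball (c j) (2 * r j)) / ENNReal.ofReal (r j) < b := by
  simp only [hatHContent, iInf_lt_iff] at h
  obtain ⟨c, r, ⟨h1, h2⟩, h3⟩ := h
  exact ⟨c, r, h1, h2, h3⟩

lemma hatHContent_mono_set {R : ℝ} {A B : Set X} (h : A ⊆ B) :
    hatHContent μ R A ≤ hatHContent μ R B := by
  refine le_iInf fun c => le_iInf fun r => le_iInf fun hc => ?_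
  exact hatHContent_le_of_cover c r hc.1 (h.trans hc.2)

lemma hatHContent_anti_scale {R₁ R₂ : ℝ} {A : Set X} (h : R₁ ≤ R₂) :
    hatHContent μ R₂ A ≤ hatHContent μ R₁ A := by
  refine le_iInf fun c => le_iInf fun r => le_iInf fun hc => ?_
  exact hatHContent_le_of_cover c r (fun j => (hc.1 j).trans h) hc.2

lemma hatHContent_le_hatH {R : ℝ} {A : Set X} (hR : 0 < R) :
    hatHContent μ R A ≤ hatH μ A := by
  have h1 : hatHContent μ R A ≤ hatHContent μ (min R 1) A :=
    hatHContent_anti_scale (min_le_left _ _)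
  refine h1.trans ?_
  refine le_iSup_of_le (min R 1) ?_
  rw [iSup_pos (lt_min hR one_pos)]

lemma hatH_mono {A B : Set X} (h : A ⊆ B) : hatH μ A ≤ hatH μ B := by
  refine iSup_le fun R => iSup_le fun hR => ?_
  exact (hatHContent_mono_set h).trans (hatHContent_le_hatH hR)

end AuxContent

section AuxOuter

variable {X : Type*} [MetricSpace X] [MeasurableSpace X] [BorelSpace X] [Nonempty X]
variable {μ : MeasureTheory.Measure X}

lemma hatHContent_empty {R : ℝ} (hR : 0 ≤ R) : hatHContent μ R (∅ : Set X) = 0 := by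
  refine le_antisymm ?_ (zero_le)
  obtain ⟨x0⟩ := ‹Nonempty X›
  have := hatHContent_le_of_cover (μ := μ) (R := R) (A := (∅ : Set X))
    (fun _ => x0) (fun _ => 0) (fun _ => hR) (empty_subset _)
  simpa using this

lemma weights_sum (ε : ℝ≥0∞) : ∑' n : ℕ, ε * 2⁻¹ ^ (n + 1) = ε := by
  rw [ENNReal.tsum_mul_left, ENNReal.tsum_geometric_add_one]
  have h2 : (1 : ℝ≥0∞) - 2⁻¹ = 2⁻¹ := ENNReal.one_sub_inv_two
  rw [h2, inv_inv]
  have : (2 : ℝ≥0∞)⁻¹ * 2 = 1 := ENNReal.inv_mul_cancel (by norm_num) (by norm_num)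
  rw [this, mul_one]

lemma hatHContent_iUnion_le {R : ℝ} (hR : 0 < R) (A : ℕ → Set X) :
    hatHContent μ R (⋃ n, A n) ≤ ∑' n, hatHContent μ R (A n) := by
  refine ENNReal.le_of_forall_pos_le_add fun ε hε hfin => ?_
  have hfin' : ∀ n, hatHContent μ R (A n) ≠ ⊤ := by
    intro n
    exact (lt_of_le_of_lt (ENNReal.le_tsum n) hfin).ne
  have hw : ∀ n : ℕ, (0 : ℝ≥0∞) < (ε : ℝ≥0∞) * 2⁻¹ ^ (n + 1) := by
    intro n
    exact ENNReal.mul_pos (by exact_mod_cast hε.ne') (pow_ne_zero _ (by norm_num))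
  have hex : ∀ n : ℕ, ∃ (c : ℕ → X) (r : ℕ → ℝ), (∀ j, r j ≤ R) ∧
      A n ⊆ ⋃ j, ball (c j) (r j) ∧
      ∑' j, μ (ball (c j) (2 * r j)) / ENNReal.ofReal (r j)
        < hatHContent μ R (A n) + (ε : ℝ≥0∞) * 2⁻¹ ^ (n + 1) := by
    intro n
    refine exists_cover_of_content_lt ?_
    exact ENNReal.lt_add_right (hfin' n) (hw n).ne'
  choose c r hr hcov hcost using hex
  set e : ℕ ≃ ℕ × ℕ := (Denumerable.eqv (ℕ × ℕ)).symm with he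
  have hsub : hatHContent μ R (⋃ n, A n) ≤
      ∑' k : ℕ, μ (ball (c (e k).1 (e k).2) (2 * r (e k).1 (e k).2)) /
        ENNReal.ofReal (r (e k).1 (e k).2) := by
    refine hatHContent_le_of_cover _ _ (fun k => hr _ _) ?_
    intro x hx
    obtain ⟨n, hn⟩ := mem_iUnion.1 hx
    obtain ⟨j, hj⟩ := mem_iUnion.1 (hcov n hn)
    refine mem_iUnion.2 ⟨e.symm (n, j), ?_⟩
    simpa using hj
  refine hsub.trans ?_
  have : ∑' k : ℕ, μ (ball (c (e k).1 (e k).2) (2 * r (e k).1 (e k).2)) /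
        ENNReal.ofReal (r (e k).1 (e k).2)
      = ∑' p : ℕ × ℕ, μ (ball (c p.1 p.2) (2 * r p.1 p.2)) / ENNReal.ofReal (r p.1 p.2) :=
    Equiv.tsum_eq e (fun p : ℕ × ℕ =>
      μ (ball (c p.1 p.2) (2 * r p.1 p.2)) / ENNReal.ofReal (r p.1 p.2))
  rw [this, ENNReal.tsum_prod']
  calc ∑' (n : ℕ) (j : ℕ), μ (ball (c n j) (2 * r n j)) / ENNReal.ofReal (r n j)
      ≤ ∑' n : ℕ, (hatHContent μ R (A n) + (ε : ℝ≥0∞) * 2⁻¹ ^ (n + 1)) :=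
        ENNReal.tsum_le_tsum fun n => (hcost n).le
    _ = (∑' n, hatHContent μ R (A n)) + ∑' n : ℕ, (ε : ℝ≥0∞) * 2⁻¹ ^ (n + 1) :=
        ENNReal.tsum_add
    _ = (∑' n, hatHContent μ R (A n)) + ε := by rw [weights_sum]

lemma hatH_empty : hatH μ (∅ : Set X) = 0 := by
  refine le_antisymm ?_ (zero_le)
  refine iSup_le fun R => iSup_le fun hR => ?_
  rw [hatHContent_empty hR.le]

lemma hatH_iUnion_le (A : ℕ → Set X) : hatH μ (⋃ n, A n) ≤ ∑' n, hatH μ (A n) := by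
  refine iSup_le fun R => iSup_le fun hR => ?_
  refine (hatHContent_iUnion_le hR A).trans ?_
  exact ENNReal.tsum_le_tsum fun n => hatHContent_le_hatH hR

/-- `hatH` as an outer measure. -/
noncomputable def hatHOuter (μ : MeasureTheory.Measure X) : MeasureTheory.OuterMeasure X where
  measureOf := hatH μ
  empty := hatH_empty
  mono := hatH_mono
  iUnion_nat s _ := hatH_iUnion_le s

lemma hatHOuter_apply (A : Set X) : hatHOuter μ A = hatH μ A := rfl

end AuxOuter

section AuxMetric

variable {X : Type*} [MetricSpace X] [MeasurableSpace X] [BorelSpace X] [Nonempty X]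
variable {μ : MeasureTheory.Measure X}

lemma hatH_eq_iSup_subtype (A : Set X) :
    hatH μ A = ⨆ R : {R : ℝ // 0 < R}, hatHContent μ R.1 A := by
  rw [hatH, iSup_subtype']

lemma hatHOuter_isMetric : (hatHOuter μ).IsMetric := by
  intro s t hst
  refine le_antisymm (measure_union_le s t) ?_
  obtain ⟨d, hd0, hsep⟩ := hst
  set d' : ℝ := (min d 1).toReal with hd'
  have hmin_ne : min d 1 ≠ 0 := by
    simp only [ne_eq, min_eq_iff]
    intro h
    rcases h with ⟨h, -⟩ | ⟨h, -⟩
    · exact hd0 h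
    · exact one_ne_zero h
  have hmin_lt : min d 1 ≠ ⊤ := by
    exact ne_top_of_le_ne_top (by norm_num) (min_le_right _ _)
  have hd'pos : 0 < d' := ENNReal.toReal_pos hmin_ne hmin_lt
  -- key: for small scales, contents add
  have key : ∀ R : ℝ, 0 < R → R ≤ d' / 4 →
      hatHContent μ R s + hatHContent μ R t ≤ hatHContent μ R (s ∪ t) := by
    intro R hR hRd
    classical
    refine le_iInf fun c => le_iInf fun r => le_iInf fun hcr => ?_
    obtain ⟨hr_le, hcov⟩ := hcr
    -- no ball can meet both s and t
    have hnotboth : ∀ j, (ball (c j) (r j) ∩ s).Nonempty →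
        (ball (c j) (r j) ∩ t).Nonempty → False := by
      intro j ⟨x, hxb, hxs⟩ ⟨y, hyb, hyt⟩
      have h1 : dist x y < 2 * R := by
        have := dist_triangle x (c j) y
        have hx : dist x (c j) < r j := mem_ball.1 hxb
        have hy : dist (c j) y < r j := by
          rw [dist_comm]; exact mem_ball.1 hyb
        nlinarith [hr_le j]
      have h2 : edist x y < ENNReal.ofReal (2 * R) := by
        rw [edist_dist]
        exact ENNReal.ofReal_lt_ofReal_iff_of_nonneg dist_nonneg |>.2 h1
      have h3 : ENNReal.ofReal (2 * R) ≤ min d 1 := by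
        rw [← ENNReal.ofReal_toReal hmin_lt]
        apply ENNReal.ofReal_le_ofReal
        nlinarith
      have h4 : d ≤ edist x y := hsep x hxs y hyt
      have : d < d := lt_of_le_of_lt h4 (lt_of_lt_of_le h2 (h3.trans (min_le_left _ _)))
      exact lt_irrefl _ this
    set rs : ℕ → ℝ := fun j => if (ball (c j) (r j) ∩ s).Nonempty then r j else 0 with hrs
    set rt : ℕ → ℝ := fun j => if (ball (c j) (r j) ∩ t).Nonempty then r j else 0 with hrt
    have hcovs : s ⊆ ⋃ j, ball (c j) (rs j) := by
      intro x hx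
      obtain ⟨j, hj⟩ := mem_iUnion.1 (hcov (Or.inl hx))
      refine mem_iUnion.2 ⟨j, ?_⟩
      have : (ball (c j) (r j) ∩ s).Nonempty := ⟨x, hj, hx⟩
      simp only [hrs, if_pos this]
      exact hj
    have hcovt : t ⊆ ⋃ j, ball (c j) (rt j) := by
      intro x hx
      obtain ⟨j, hj⟩ := mem_iUnion.1 (hcov (Or.inr hx))
      refine mem_iUnion.2 ⟨j, ?_⟩
      have : (ball (c j) (r j) ∩ t).Nonempty := ⟨x, hj, hx⟩
      simp only [hrt, if_pos this]
      exact hj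
    have hrsle : ∀ j, rs j ≤ R := by
      intro j; simp only [hrs]; split
      · exact hr_le j
      · exact hR.le
    have hrtle : ∀ j, rt j ≤ R := by
      intro j; simp only [hrt]; split
      · exact hr_le j
      · exact hR.le
    have h1 : hatHContent μ R s ≤ ∑' j, μ (ball (c j) (2 * rs j)) / ENNReal.ofReal (rs j) :=
      hatHContent_le_of_cover c rs hrsle hcovs
    have h2 : hatHContent μ R t ≤ ∑' j, μ (ball (c j) (2 * rt j)) / ENNReal.ofReal (rt j) :=
      hatHContent_le_of_cover c rt hrtle hcovt
    calc hatHContent μ R s + hatHContent μ R t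
        ≤ (∑' j, μ (ball (c j) (2 * rs j)) / ENNReal.ofReal (rs j)) +
          ∑' j, μ (ball (c j) (2 * rt j)) / ENNReal.ofReal (rt j) := add_le_add h1 h2
      _ = ∑' j, (μ (ball (c j) (2 * rs j)) / ENNReal.ofReal (rs j) +
            μ (ball (c j) (2 * rt j)) / ENNReal.ofReal (rt j)) := ENNReal.tsum_add.symm
      _ ≤ ∑' j, μ (ball (c j) (2 * r j)) / ENNReal.ofReal (r j) := by
          refine ENNReal.tsum_le_tsum fun j => ?_
          by_cases hs : (ball (c j) (r j) ∩ s).Nonempty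
          · by_cases ht : (ball (c j) (r j) ∩ t).Nonempty
            · exact absurd ht (fun h => hnotboth j hs h)
            · simp only [hrs, hrt, if_pos hs, if_neg ht, mul_zero, Metric.ball_zero,
                measure_empty, ENNReal.zero_div, add_zero]
              simp
          · by_cases ht : (ball (c j) (r j) ∩ t).Nonempty
            · simp only [hrs, hrt, if_neg hs, if_pos ht, mul_zero, Metric.ball_zero,
                measure_empty, ENNReal.zero_div, zero_add]
              simp
            · simp only [hrs, hrt, if_neg hs, if_neg ht, mul_zero, Metric.ball_zero,
                measure_empty, ENNReal.zero_div, add_zero]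
              simp
  -- assemble via iSup over subtype
  have hrep : ∀ (A : Set X), hatHOuter μ A = ⨆ R : {R : ℝ // 0 < R}, hatHContent μ R.1 A :=
    fun A => hatH_eq_iSup_subtype A
  rw [hrep s, hrep t, hrep (s ∪ t)]
  rw [ENNReal.iSup_add_iSup]
  · refine iSup_le fun R => ?_
    set R' : ℝ := min R.1 (d' / 4) with hR'
    have hR'pos : 0 < R' := lt_min R.2 (by positivity)
    have h1 : hatHContent μ R.1 s ≤ hatHContent μ R' s :=
      hatHContent_anti_scale (min_le_left _ _)
    have h2 : hatHContent μ R.1 t ≤ hatHContent μ R' t :=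
      hatHContent_anti_scale (min_le_left _ _)
    refine le_trans (add_le_add h1 h2) ?_
    refine le_trans (key R' hR'pos (min_le_right _ _)) ?_
    exact le_iSup_of_le ⟨R', hR'pos⟩ le_rfl
  · intro i j
    refine ⟨⟨min i.1 j.1, lt_min i.2 j.2⟩, ?_⟩
    exact add_le_add (hatHContent_anti_scale (min_le_left _ _))
      (hatHContent_anti_scale (min_le_right _ _))

lemma hatH_tsum_inter_le {D : ℕ → Set X} (hD : ∀ k, MeasurableSet (D k))
    (hdisj : Pairwise (Function.onFun Disjoint D)) (T : Set X) :
    ∑' k, hatH μ (T ∩ D k) ≤ hatH μ T := by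
  have hb : borel X ≤ (hatHOuter μ).caratheodory :=
    (hatHOuter_isMetric (μ := μ)).borel_le_caratheodory
  have hcar : ∀ k, (hatHOuter μ).IsCaratheodory (D k) := by
    intro k
    have : MeasurableSet[borel X] (D k) := by
      rw [← BorelSpace.measurable_eq]; exact hD k
    exact ((hatHOuter μ).isCaratheodory_iff).1 (hb _ this)
  have : ∀ n : ℕ, ∑ k ∈ Finset.range n, hatH μ (T ∩ D k) ≤ hatH μ T := by
    intro n
    have hsum := MeasureTheory.OuterMeasure.isCaratheodory_sum (hatHOuter μ) hcar hdisj
      (t := T) (n := n)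
    have : ∑ k ∈ Finset.range n, hatH μ (T ∩ D k)
        = hatHOuter μ (T ∩ ⋃ i, ⋃ (_ : i < n), D i) := hsum
    rw [this]
    exact hatH_mono inter_subset_left
  rw [ENNReal.tsum_eq_iSup_nat]
  exact iSup_le this

end AuxMetric

section AuxPre

variable {Y : Type*} [MetricSpace Y] [MeasurableSpace Y] [BorelSpace Y]

/-- The 1-dimensional Hausdorff premeasure at gauge `r`, matching
`hausdorffMeasure_apply`. -/
noncomputable def hPre (r : ℝ≥0∞) (S : Set Y) : ℝ≥0∞ :=
  ⨅ (t : ℕ → Set Y) (_ : S ⊆ ⋃ n, t n) (_ : ∀ n, EMetric.diam (t n) ≤ r),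
    ∑' n, ⨆ _ : (t n).Nonempty, EMetric.diam (t n) ^ (1 : ℝ)

lemma hausdorffMeasure_eq_iSup_hPre (S : Set Y) :
    μH[1] S = ⨆ (r : ℝ≥0∞) (_ : 0 < r), hPre r S :=
  MeasureTheory.Measure.hausdorffMeasure_apply 1 S

lemma hPre_le_of_cover {r : ℝ≥0∞} {S : Set Y} (t : ℕ → Set Y)
    (hcov : S ⊆ ⋃ n, t n) (hdiam : ∀ n, EMetric.diam (t n) ≤ r) :
    hPre r S ≤ ∑' n, ⨆ _ : (t n).Nonempty, EMetric.diam (t n) ^ (1 : ℝ) :=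
  iInf_le_of_le t (iInf_le_of_le hcov (iInf_le_of_le hdiam le_rfl))

lemma hPre_mono_set {r : ℝ≥0∞} {S T : Set Y} (h : S ⊆ T) : hPre r S ≤ hPre r T := by
  refine le_iInf fun t => le_iInf fun hcov => le_iInf fun hdiam => ?_
  exact hPre_le_of_cover t (h.trans hcov) hdiam

lemma hPre_anti {r r' : ℝ≥0∞} {S : Set Y} (h : r ≤ r') : hPre r' S ≤ hPre r S := by
  refine le_iInf fun t => le_iInf fun hcov => le_iInf fun hdiam => ?_
  exact hPre_le_of_cover t hcov (fun n => (hdiam n).trans h)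

lemma exists_hPre_pos {S : Set Y} (h : 0 < μH[1] S) :
    ∃ r : ℝ≥0∞, 0 < r ∧ 0 < hPre r S := by
  rw [hausdorffMeasure_eq_iSup_hPre] at h
  obtain ⟨r, hr⟩ := lt_iSup_iff.1 h
  obtain ⟨hr0, hrS⟩ := lt_iSup_iff.1 hr
  exact ⟨r, hr0, hrS⟩

lemma hPre_iUnion_le {r : ℝ≥0∞} (S : ℕ → Set Y) :
    hPre r (⋃ n, S n) ≤ ∑' n, hPre r (S n) := by
  refine ENNReal.le_of_forall_pos_le_add fun ε hε hfin => ?_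
  have hfin' : ∀ n, hPre r (S n) ≠ ⊤ := fun n =>
    (lt_of_le_of_lt (ENNReal.le_tsum n) hfin).ne
  have hex : ∀ n : ℕ, ∃ t : ℕ → Set Y, (S n ⊆ ⋃ j, t j) ∧ (∀ j, EMetric.diam (t j) ≤ r) ∧
      ∑' j, (⨆ _ : (t j).Nonempty, EMetric.diam (t j) ^ (1 : ℝ))
        < hPre r (S n) + (ε : ℝ≥0∞) * 2⁻¹ ^ (n + 1) := by
    intro n
    have hlt : hPre r (S n) < hPre r (S n) + (ε : ℝ≥0∞) * 2⁻¹ ^ (n + 1) :=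
      ENNReal.lt_add_right (hfin' n)
        (ENNReal.mul_pos (by exact_mod_cast hε.ne') (pow_ne_zero _ (by norm_num))).ne'
    simp only [hPre, iInf_lt_iff] at hlt
    obtain ⟨t, h1, h2, h3⟩ := hlt
    exact ⟨t, h1, h2, h3⟩
  choose t hcov hdiam hcost using hex
  set e : ℕ ≃ ℕ × ℕ := (Denumerable.eqv (ℕ × ℕ)).symm with he
  have hsub : hPre r (⋃ n, S n) ≤
      ∑' k : ℕ, ⨆ _ : (t (e k).1 (e k).2).Nonempty, EMetric.diam (t (e k).1 (e k).2) ^ (1 : ℝ) := by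
    refine hPre_le_of_cover _ ?_ (fun k => hdiam _ _)
    intro x hx
    obtain ⟨n, hn⟩ := mem_iUnion.1 hx
    obtain ⟨j, hj⟩ := mem_iUnion.1 (hcov n hn)
    refine mem_iUnion.2 ⟨e.symm (n, j), ?_⟩
    simpa using hj
  refine hsub.trans ?_
  have heq : ∑' k : ℕ, (⨆ _ : (t (e k).1 (e k).2).Nonempty, EMetric.diam (t (e k).1 (e k).2) ^ (1 : ℝ))
      = ∑' p : ℕ × ℕ, ⨆ _ : (t p.1 p.2).Nonempty, EMetric.diam (t p.1 p.2) ^ (1 : ℝ) :=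
    Equiv.tsum_eq e (fun p : ℕ × ℕ => ⨆ _ : (t p.1 p.2).Nonempty, EMetric.diam (t p.1 p.2) ^ (1 : ℝ))
  rw [heq, ENNReal.tsum_prod']
  calc ∑' (n : ℕ) (j : ℕ), ⨆ _ : (t n j).Nonempty, EMetric.diam (t n j) ^ (1 : ℝ)
      ≤ ∑' n : ℕ, (hPre r (S n) + (ε : ℝ≥0∞) * 2⁻¹ ^ (n + 1)) :=
        ENNReal.tsum_le_tsum fun n => (hcost n).le
    _ = (∑' n, hPre r (S n)) + ∑' n : ℕ, (ε : ℝ≥0∞) * 2⁻¹ ^ (n + 1) := ENNReal.tsum_add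
    _ = (∑' n, hPre r (S n)) + ε := by rw [weights_sum]

end AuxPre

section AuxCurve

variable {X : Type*} [MetricSpace X] [MeasurableSpace X] [BorelSpace X]

lemma Curve.continuousOn' (γ : Curve X) : ContinuousOn γ.toFun (Icc 0 γ.len) :=
  γ.lip.continuousOn

lemma Curve.aemeasurable' (γ : Curve X) :
    AEMeasurable γ.toFun (MeasureTheory.volume.restrict (Icc 0 γ.len)) :=
  γ.continuousOn'.aemeasurable measurableSet_Icc

lemma Curve.time_in_ball (γ : Curve X) {c : X} {r : ℝ} (hr : 0 < r) (hrlen : r ≤ γ.len)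
    {t₀ : ℝ} (ht₀ : t₀ ∈ Icc (0:ℝ) γ.len) (hmem : γ.toFun t₀ ∈ ball c r) :
    ENNReal.ofReal r ≤
      ∫⁻ s in Icc (0:ℝ) γ.len, (ball c (2*r)).indicator (fun _ => (1:ℝ≥0∞)) (γ.toFun s) := by
  set I : Set ℝ := Ioo (max 0 (t₀ - r)) (min γ.len (t₀ + r)) with hI
  have hIsub : I ⊆ Icc 0 γ.len := fun s hs =>
    ⟨(le_max_left _ _).trans hs.1.le, hs.2.le.trans (min_le_left _ _)⟩
  have hIball : ∀ s ∈ I, γ.toFun s ∈ ball c (2*r) := by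
    intro s hs
    have h1 : |s - t₀| < r := by
      rw [abs_sub_lt_iff]
      constructor
      · have := lt_of_lt_of_le hs.2 (min_le_right _ _); linarith
      · have := lt_of_le_of_lt (le_max_right 0 (t₀ - r)) hs.1; linarith
    have hdist : dist (γ.toFun s) (γ.toFun t₀) ≤ |s - t₀| := by
      have := γ.lip.dist_le_mul s (hIsub hs) t₀ ht₀
      simpa [Real.dist_eq] using this
    have : dist (γ.toFun s) c < 2 * r := by
      have h2 : dist (γ.toFun t₀) c < r := mem_ball.1 hmem
      calc dist (γ.toFun s) c ≤ dist (γ.toFun s) (γ.toFun t₀) + dist (γ.toFun t₀) c :=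
            dist_triangle _ _ _
        _ < r + r := add_lt_add_of_le_of_lt (hdist.trans h1.le) h2
        _ = 2 * r := by ring
    exact mem_ball.2 this
  have hvol : ENNReal.ofReal r ≤ MeasureTheory.volume I := by
    rw [hI, Real.volume_Ioo]
    apply ENNReal.ofReal_le_ofReal
    rcases le_total (t₀ - r) 0 with h | h
    · rw [max_eq_left h]
      have h1 : r ≤ min γ.len (t₀ + r) := le_min hrlen (by linarith [ht₀.1])
      linarith
    · rw [max_eq_right h]
      have h1 : t₀ ≤ min γ.len (t₀ + r) := le_min ht₀.2 (by linarith)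
      linarith
  calc ENNReal.ofReal r ≤ MeasureTheory.volume I := hvol
    _ = ∫⁻ _ in I, (1:ℝ≥0∞) := (MeasureTheory.setLIntegral_one I).symm
    _ ≤ ∫⁻ s in I, (ball c (2*r)).indicator (fun _ => (1:ℝ≥0∞)) (γ.toFun s) := by
        refine MeasureTheory.setLIntegral_mono' measurableSet_Ioo fun s hs => ?_
        rw [Set.indicator_of_mem (hIball s hs)]
    _ ≤ ∫⁻ s in Icc (0:ℝ) γ.len, (ball c (2*r)).indicator (fun _ => (1:ℝ≥0∞)) (γ.toFun s) :=
        MeasureTheory.lintegral_mono_set hIsub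

end AuxCurve

section Stratum

open MeasureTheory

variable {X Y : Type*} [MetricSpace X] [MeasurableSpace X] [BorelSpace X]
  [MetricSpace Y] [MeasurableSpace Y] [BorelSpace Y] [Nonempty X]

/-- Core construction: an admissible function of small norm for the stratum of curves of
length at least `ℓ₀` along which `f(γ ∩ A)` has `hPre t`-premeasure at least `δ`. -/
lemma stratum_rho (μ : Measure X) (H : Set X) (f : X → Y) (hcont : ContinuousOn f H)
    (A : Set X) (hA : A ⊆ H) (hAfin : hatH μ A < ⊤)
    (t δ : ℝ≥0∞) (ht : 0 < t) (hδ0 : 0 < δ) (hδtop : δ < ⊤)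
    (ℓ₀ : ℝ) (hℓ : 0 < ℓ₀) (ε : ℝ≥0∞) (hε : 0 < ε) (hεtop : ε < ⊤) :
    ∃ ρ : X → ℝ≥0∞, Measurable ρ ∧ (∫⁻ x, ρ x ∂μ) ≤ ε ∧
      ∀ γ : Curve X, γ.In H → ℓ₀ ≤ γ.len →
        δ ≤ hPre t (f '' (γ.image ∩ A)) → 1 ≤ γ.integral ρ := by
  classical
  set C : ℝ≥0∞ := hatH μ A + 1 with hC
  have hC0 : C ≠ 0 := by simp [hC]
  have hCtop : C ≠ ⊤ := by
    simp only [hC, ne_eq, ENNReal.add_eq_top, not_or]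
    exact ⟨hAfin.ne, by norm_num⟩
  set a : ℝ≥0∞ := ε / C with ha
  have ha0 : a ≠ 0 := by
    simp only [ha, ne_eq, ENNReal.div_eq_zero_iff, not_or]
    exact ⟨hε.ne', hCtop⟩
  have hatop : a ≠ ⊤ := by
    simp only [ha, ne_eq, ENNReal.div_eq_top, not_or, not_and]
    constructor
    · intro _; exact hC0
    · intro h; exact absurd h hεtop.ne
  set εosc : ℝ≥0∞ := min t (δ * a) with hεosc
  have hεosc0 : εosc ≠ 0 := by
    simp only [hεosc, ne_eq, min_eq_iff]
    rintro (⟨h, -⟩ | ⟨h, -⟩)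
    · exact ht.ne' h
    · exact (ENNReal.mul_pos hδ0.ne' ha0).ne' h
  have hεosctop : εosc ≠ ⊤ :=
    ne_top_of_le_ne_top (ENNReal.mul_ne_top hδtop.ne hatop) (min_le_right _ _)
  -- oscillation sets
  set F : ℕ → Set X := fun k =>
    {x | ∀ p ∈ H ∩ ball x (1/(k+1):ℝ), ∀ q ∈ H ∩ ball x (1/(k+1):ℝ),
      edist (f p) (f q) ≤ εosc} with hF
  have hFclosed : ∀ k, IsClosed (F k) := by
    intro k
    rw [← isOpen_compl_iff]
    rw [Metric.isOpen_iff]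
    intro x hx
    simp only [hF, mem_compl_iff, mem_setOf_eq, not_forall] at hx
    obtain ⟨p, hp, q, hq, hpq⟩ := hx
    have hp2 := hp.2
    have hq2 := hq.2
    rw [mem_ball] at hp2 hq2
    refine ⟨1/(k+1) - max (dist p x) (dist q x), by
      simp only [sub_pos, max_lt_iff]; exact ⟨hp2, hq2⟩, ?_⟩
    intro y hy
    rw [mem_ball] at hy
    rw [dist_comm y x] at hy
    simp only [hF, mem_compl_iff, mem_setOf_eq, not_forall]
    refine ⟨p, ⟨hp.1, ?_⟩, q, ⟨hq.1, ?_⟩, hpq⟩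
    · rw [mem_ball]
      calc dist p y ≤ dist p x + dist x y := dist_triangle _ _ _
        _ < max (dist p x) (dist q x) + (1/(k+1) - max (dist p x) (dist q x)) :=
            add_lt_add_of_le_of_lt (le_max_left _ _) hy
        _ = 1/(k+1) := by ring
    · rw [mem_ball]
      calc dist q y ≤ dist q x + dist x y := dist_triangle _ _ _
        _ < max (dist p x) (dist q x) + (1/(k+1) - max (dist p x) (dist q x)) :=
            add_lt_add_of_le_of_lt (le_max_right _ _) hy
        _ = 1/(k+1) := by ring
  have hHF : H ⊆ ⋃ k, F k := by
    intro x hx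
    have hcw : ContinuousWithinAt f H x := hcont x hx
    have hhalf : (0:ℝ≥0∞) < εosc / 2 :=
      ENNReal.div_pos hεosc0 (by norm_num)
    have hball : EMetric.ball (f x) (εosc / 2) ∈ nhds (f x) :=
      EMetric.ball_mem_nhds _ hhalf
    have hev : f ⁻¹' EMetric.ball (f x) (εosc / 2) ∈ nhdsWithin x H := hcw hball
    rw [Metric.mem_nhdsWithin_iff] at hev
    obtain ⟨rad, hrad, hsub⟩ := hev
    obtain ⟨k, hk⟩ := exists_nat_one_div_lt hrad
    refine mem_iUnion.2 ⟨k, ?_⟩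
    intro p hp q hq
    have hp' : p ∈ f ⁻¹' EMetric.ball (f x) (εosc / 2) := by
      apply hsub
      refine ⟨?_, hp.1⟩
      exact mem_ball.2 (lt_trans (mem_ball.1 hp.2) hk)
    have hq' : q ∈ f ⁻¹' EMetric.ball (f x) (εosc / 2) := by
      apply hsub
      refine ⟨?_, hq.1⟩
      exact mem_ball.2 (lt_trans (mem_ball.1 hq.2) hk)
    simp only [mem_preimage, EMetric.mem_ball] at hp' hq'
    calc edist (f p) (f q) ≤ edist (f p) (f x) + edist (f x) (f q) := edist_triangle _ _ _
      _ ≤ εosc / 2 + εosc / 2 := by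
          refine add_le_add hp'.le ?_
          rw [edist_comm]; exact hq'.le
      _ = εosc := ENNReal.add_halves _
  -- disjointed pieces
  set D : ℕ → Set X := disjointed F with hD
  have hDmeas : ∀ k, MeasurableSet (D k) :=
    MeasurableSet.disjointed (fun k => (hFclosed k).measurableSet)
  have hDdisj : Pairwise (Function.onFun Disjoint D) := disjoint_disjointed F
  have hDF : ∀ k, D k ⊆ F k := disjointed_subset F
  have hAD : A ⊆ ⋃ k, D k := by
    rw [hD, iUnion_disjointed]
    exact hA.trans hHF
  -- scales
  set R : ℕ → ℝ := fun k => min ℓ₀ (1/(4*(k+1))) with hR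
  have hRpos : ∀ k, 0 < R k := fun k => lt_min hℓ (by positivity)
  -- covers
  have hex : ∀ k : ℕ, ∃ (c : ℕ → X) (r : ℕ → ℝ), (∀ j, r j ≤ R k) ∧
      (A ∩ D k) ⊆ ⋃ j, ball (c j) (r j) ∧
      ∑' j, μ (ball (c j) (2 * r j)) / ENNReal.ofReal (r j)
        < hatH μ (A ∩ D k) + 2⁻¹ ^ (k + 1) := by
    intro k
    refine exists_cover_of_content_lt ?_
    refine lt_of_le_of_lt (hatHContent_le_hatH (hRpos k)) ?_
    refine ENNReal.lt_add_right ?_ (pow_ne_zero _ (by norm_num))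
    exact ((hatH_mono inter_subset_left).trans_lt hAfin).ne
  choose c r hrle hcov hcost using hex
  -- the admissible function
  set g : ℕ → X → ℝ≥0∞ := fun k x => ∑' j,
    (ENNReal.ofReal (r k j))⁻¹ * (ball (c k j) (2 * r k j)).indicator (fun _ => (1:ℝ≥0∞)) x
    with hg
  have hgmeas : ∀ k, Measurable (g k) := by
    intro k
    refine Measurable.ennreal_tsum fun j => ?_
    exact (measurable_const.indicator measurableSet_ball).const_mul _
  refine ⟨fun x => a * ∑' k, g k x, ?_, ?_, ?_⟩
  · exact (Measurable.ennreal_tsum hgmeas).const_mul _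
  · -- norm bound
    rw [lintegral_const_mul' _ _ hatop, lintegral_tsum (fun k => (hgmeas k).aemeasurable)]
    have hint : ∀ k, ∫⁻ x, g k x ∂μ ≤ hatH μ (A ∩ D k) + 2⁻¹ ^ (k + 1) := by
      intro k
      rw [hg]
      simp only
      rw [lintegral_tsum (fun j => ((measurable_const.indicator
        measurableSet_ball).const_mul _).aemeasurable)]
      refine le_trans (ENNReal.tsum_le_tsum fun j => ?_) (hcost k).le
      by_cases hrj : 0 < r k j
      · rw [lintegral_const_mul' _ _ (by
          simp only [ne_eq, ENNReal.inv_eq_top, ENNReal.ofReal_eq_zero, not_le]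
          exact hrj)]
        have heq : ∫⁻ x, (ball (c k j) (2 * r k j)).indicator (fun _ => (1:ℝ≥0∞)) x ∂μ
            = μ (ball (c k j) (2 * r k j)) := lintegral_indicator_one measurableSet_ball
        rw [heq, ENNReal.div_eq_inv_mul]
      · have : ball (c k j) (2 * r k j) = ∅ := by
          apply ball_eq_empty.2
          push_neg at hrj
          linarith
        rw [this]
        simp only [Set.indicator_empty]
        simp
    have hsumC : ∑' k, ∫⁻ x, g k x ∂μ ≤ C :=
      calc ∑' k, ∫⁻ x, g k x ∂μ ≤ ∑' k, (hatH μ (A ∩ D k) + 2⁻¹ ^ (k + 1)) :=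
          ENNReal.tsum_le_tsum hint
      _ = (∑' k, hatH μ (A ∩ D k)) + ∑' k : ℕ, (2⁻¹:ℝ≥0∞) ^ (k + 1) := ENNReal.tsum_add
      _ ≤ hatH μ A + 1 := by
          refine add_le_add (hatH_tsum_inter_le hDmeas hDdisj A) ?_
          have := weights_sum (1 : ℝ≥0∞)
          simp only [one_mul] at this
          rw [this]
      _ = C := hC.symm
    refine le_trans (mul_le_mul_right hsumC a) ?_
    rw [ha, ENNReal.div_mul_cancel hC0 hCtop]
  · -- admissibility
    intro γ hγH hγlen hγδ
    set Set1 : ℕ → ℕ → Set X := fun k j => γ.image ∩ (A ∩ D k) ∩ ball (c k j) (r k j)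
      with hSet1
    set mm : ℕ → ℕ → ℝ≥0∞ := fun k j => if (Set1 k j).Nonempty then 1 else 0 with hmm
    set N : ℝ≥0∞ := ∑' k, ∑' j, mm k j with hN
    -- raw diameter bound
    have hdiam_raw : ∀ k j, EMetric.diam (f '' Set1 k j) ≤ εosc := by
      intro k j
      by_cases hne : (Set1 k j).Nonempty
      · obtain ⟨x, hx⟩ := hne
        apply EMetric.diam_le
        rintro y₁ ⟨p, hp, rfl⟩ y₂ ⟨q, hq, rfl⟩
        have hxF : x ∈ F k := hDF k hx.1.2.2
        have hdist : ∀ z, z ∈ Set1 k j → z ∈ H ∩ ball x (1/(k+1):ℝ) := by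
          intro z hz
          refine ⟨hγH hz.1.1, ?_⟩
          rw [mem_ball]
          have h1 : dist z (c k j) < r k j := mem_ball.1 hz.2
          have h2 : dist x (c k j) < r k j := mem_ball.1 hx.2
          have h3 : r k j ≤ R k := hrle k j
          have h4 : R k ≤ 1/(4*((k:ℝ)+1)) := min_le_right _ _
          have hk : (0:ℝ) < (k:ℝ)+1 := by positivity
          have h5 : 1/(2*((k:ℝ)+1)) < 1/((k:ℝ)+1) := by
            apply one_div_lt_one_div_of_lt hk
            linarith
          have h6 : dist z x < 2 * r k j := by
            calc dist z x ≤ dist z (c k j) + dist (c k j) x := dist_triangle _ _ _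
              _ < r k j + r k j := by
                  rw [dist_comm (c k j) x]
                  exact add_lt_add h1 h2
              _ = 2 * r k j := by ring
          have h7 : 2 * r k j ≤ 1/(2*((k:ℝ)+1)) := by
            have hh : r k j ≤ 1/(4*((k:ℝ)+1)) := h3.trans h4
            have h4k : (0:ℝ) < 4*((k:ℝ)+1) := by positivity
            have h2k : (0:ℝ) < 2*((k:ℝ)+1) := by positivity
            have hmul := mul_le_mul_of_nonneg_right hh h4k.le
            rw [one_div, inv_mul_cancel₀ h4k.ne'] at hmul
            rw [le_div_iff₀ h2k]
            nlinarith
          linarith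
        exact hxF p (hdist p hp) q (hdist q hq)
      · rw [not_nonempty_iff_eq_empty] at hne
        rw [hne, image_empty, show EMetric.diam (∅ : Set Y) = 0 from EMetric.diam_empty]
        exact zero_le
    -- premeasure chain
    have hperk : ∀ k, hPre t (f '' (γ.image ∩ (A ∩ D k))) ≤ ∑' j, εosc * mm k j := by
      intro k
      have hcover : f '' (γ.image ∩ (A ∩ D k)) ⊆ ⋃ j, f '' Set1 k j := by
        rw [← image_iUnion]
        apply image_mono
        intro z hz
        obtain ⟨j, hj⟩ := mem_iUnion.1 (hcov k hz.2)
        exact mem_iUnion.2 ⟨j, hz, hj⟩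
      refine le_trans (hPre_le_of_cover (fun j => f '' Set1 k j) hcover
        (fun j => (hdiam_raw k j).trans (min_le_left _ _))) ?_
      refine ENNReal.tsum_le_tsum fun j => ?_
      by_cases hne : (Set1 k j).Nonempty
      · have hmij : mm k j = 1 := by rw [hmm]; simp only [if_pos hne]
        rw [hmij, mul_one]
        refine iSup_le fun _ => ?_
        rw [ENNReal.rpow_one]
        exact hdiam_raw k j
      · have himg : ¬ (f '' Set1 k j).Nonempty := by
          rw [not_nonempty_iff_eq_empty] at hne ⊢
          rw [hne, image_empty]
        rw [iSup_neg himg]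
        exact zero_le
    have hchain : δ ≤ εosc * N := by
      have h1 : γ.image ∩ A ⊆ ⋃ k, (γ.image ∩ (A ∩ D k)) := by
        intro z hz
        obtain ⟨k, hk⟩ := mem_iUnion.1 (hAD hz.2)
        exact mem_iUnion.2 ⟨k, hz.1, hz.2, hk⟩
      have h2 : f '' (γ.image ∩ A) ⊆ ⋃ k, f '' (γ.image ∩ (A ∩ D k)) := by
        rw [← image_iUnion]
        exact image_mono h1
      calc δ ≤ hPre t (f '' (γ.image ∩ A)) := hγδ
        _ ≤ hPre t (⋃ k, f '' (γ.image ∩ (A ∩ D k))) := hPre_mono_set h2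
        _ ≤ ∑' k, hPre t (f '' (γ.image ∩ (A ∩ D k))) := hPre_iUnion_le _
        _ ≤ ∑' k, ∑' j, εosc * mm k j := ENNReal.tsum_le_tsum hperk
        _ = ∑' k, εosc * ∑' j, mm k j := tsum_congr fun k => ENNReal.tsum_mul_left
        _ = εosc * N := ENNReal.tsum_mul_left
    have hN1 : (1:ℝ≥0∞) ≤ a * N := by
      have h5 : δ * 1 ≤ δ * (a * N) := by
        calc δ * 1 = δ := mul_one δ
          _ ≤ εosc * N := hchain
          _ ≤ (δ * a) * N := mul_le_mul_left (min_le_right _ _) N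
          _ = δ * (a * N) := mul_assoc _ _ _
      exact (ENNReal.mul_le_mul_iff_right hδ0.ne' hδtop.ne).1 h5
    -- integral chain
    have hIck : ∀ k j, mm k j ≤ ∫⁻ s in Icc (0:ℝ) γ.len,
        (ENNReal.ofReal (r k j))⁻¹ *
          (ball (c k j) (2 * r k j)).indicator (fun _ => (1:ℝ≥0∞)) (γ.toFun s) := by
      intro k j
      by_cases hne : (Set1 k j).Nonempty
      · obtain ⟨x, hx⟩ := hne
        obtain ⟨t₀, ht₀, hxt⟩ := hx.1.1
        have hrpos : 0 < r k j := lt_of_le_of_lt dist_nonneg (mem_ball.1 hx.2)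
        have hinvtop : (ENNReal.ofReal (r k j))⁻¹ ≠ ⊤ := by
          simp only [ne_eq, ENNReal.inv_eq_top, ENNReal.ofReal_eq_zero, not_le]
          exact hrpos
        have hrlen' : r k j ≤ γ.len := (hrle k j).trans ((min_le_left _ _).trans hγlen)
        have hmemb : γ.toFun t₀ ∈ ball (c k j) (r k j) := by rw [hxt]; exact hx.2
        have htime := γ.time_in_ball hrpos hrlen' ht₀ hmemb
        rw [lintegral_const_mul' _ _ hinvtop]
        have h8 : (ENNReal.ofReal (r k j))⁻¹ * ENNReal.ofReal (r k j) ≤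
            (ENNReal.ofReal (r k j))⁻¹ * ∫⁻ s in Icc (0:ℝ) γ.len,
              (ball (c k j) (2 * r k j)).indicator (fun _ => (1:ℝ≥0∞)) (γ.toFun s) :=
          mul_le_mul_right htime _
        have h9 : (ENNReal.ofReal (r k j))⁻¹ * ENNReal.ofReal (r k j) = 1 :=
          ENNReal.inv_mul_cancel (ENNReal.ofReal_pos.2 hrpos).ne' ENNReal.ofReal_ne_top
        have hm1 : mm k j = 1 := by
          rw [hmm]
          simp only [if_pos (Set.nonempty_of_mem hx)]
        rw [hm1]
        calc (1:ℝ≥0∞) = (ENNReal.ofReal (r k j))⁻¹ * ENNReal.ofReal (r k j) := h9.symm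
          _ ≤ _ := h8
      · have hm0 : mm k j = 0 := by rw [hmm]; simp only [if_neg hne]
        rw [hm0]
        exact zero_le
    have haem : ∀ k j, AEMeasurable (fun s => (ENNReal.ofReal (r k j))⁻¹ *
        (ball (c k j) (2 * r k j)).indicator (fun _ => (1:ℝ≥0∞)) (γ.toFun s))
        (MeasureTheory.volume.restrict (Icc (0:ℝ) γ.len)) := by
      intro k j
      exact ((measurable_const.indicator measurableSet_ball).const_mul _).comp_aemeasurable
        γ.aemeasurable'
    calc (1:ℝ≥0∞) ≤ a * N := hN1
      _ ≤ γ.integral (fun x => a * ∑' k, g k x) := by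
          show a * N ≤ ∫⁻ s in Icc (0:ℝ) γ.len, a * ∑' k, g k (γ.toFun s)
          rw [lintegral_const_mul' _ _ hatop]
          refine mul_le_mul_right ?_ a
          have hswap : ∫⁻ s in Icc (0:ℝ) γ.len, ∑' k, g k (γ.toFun s)
              = ∑' k, ∫⁻ s in Icc (0:ℝ) γ.len, g k (γ.toFun s) :=
            lintegral_tsum (fun k => (hgmeas k).comp_aemeasurable γ.aemeasurable')
          rw [hswap, hN]
          refine ENNReal.tsum_le_tsum fun k => ?_
          have hswap2 : ∫⁻ s in Icc (0:ℝ) γ.len, g k (γ.toFun s)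
              = ∑' j, ∫⁻ s in Icc (0:ℝ) γ.len,
                  (ENNReal.ofReal (r k j))⁻¹ *
                    (ball (c k j) (2 * r k j)).indicator (fun _ => (1:ℝ≥0∞)) (γ.toFun s) :=
            lintegral_tsum (haem k)
          rw [hswap2]
          exact ENNReal.tsum_le_tsum (hIck k)

end Stratum

/-- Lemma 5.2: if `f : H → Y` is continuous and `E ⊆ H` has σ-finite `Ĥ`-measure, then the
family of curves in `H` along which `f(γ ∩ E)` has positive `H¹`-measure has zero 1-modulus. -/
theorem image_H1_measure_zero
    {X Y : Type*} [MetricSpace X] [MeasurableSpace X] [BorelSpace X]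
    [MetricSpace Y] [MeasurableSpace Y] [BorelSpace Y]
    (μ : Measure X) (ν : Measure Y)
    (hμfin : FiniteOnBalls μ) (hνfin : FiniteOnBalls ν)
    (H : Set X) (f : X → Y) (hcont : ContinuousOn f H)
    (E : Set X) (hEsub : E ⊆ H)
    (hsig : SigmaFiniteSet (hatH μ) E) :
    Mod1 μ {γ : Curve X | γ.In H ∧ 0 < μH[1] (f '' (γ.image ∩ E))} = 0 := by
  classical
  haveI : MeasureTheory.NoAtoms (μH[1] : MeasureTheory.Measure Y) :=
    MeasureTheory.Measure.noAtoms_hausdorff Y one_pos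
  rcases isEmpty_or_nonempty X with hX | hX
  · -- no curves at all
    refine le_antisymm ?_ (zero_le)
    refine iInf_le_of_le (fun _ => 0) (iInf_le_of_le measurable_const
      (iInf_le_of_le ?_ ?_))
    · intro γ _
      exact (hX.false (γ.toFun 0)).elim
    · simp
  obtain ⟨Ei, hEsubU, hEifin⟩ := hsig
  -- it suffices to bound by every positive ε
  refine le_antisymm ?_ (zero_le)
  refine ENNReal.le_of_forall_pos_le_add fun ε0 hε0 _ => ?_
  rw [zero_add]
  set ε : ℝ≥0∞ := (ε0 : ℝ≥0∞) with hε
  have hεpos : 0 < ε := ENNReal.coe_pos.2 hε0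
  have hεtop : ε < ⊤ := ENNReal.coe_lt_top
  -- strata
  set ι := ℕ × ℕ × ℕ × ℕ with hι
  have hweight : ∀ n : ι, (0:ℝ≥0∞) < ε * 2⁻¹ ^ (Encodable.encode n + 1) := fun n =>
    ENNReal.mul_pos hεpos.ne' (pow_ne_zero _ (by norm_num))
  have hweighttop : ∀ n : ι, ε * 2⁻¹ ^ (Encodable.encode n + 1) < ⊤ := fun n =>
    ENNReal.mul_lt_top hεtop (by
      refine lt_of_le_of_lt (pow_le_one' (by norm_num) _) (by norm_num))
  have hstrata : ∀ n : ι, ∃ ρ : X → ℝ≥0∞, Measurable ρ ∧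
      (∫⁻ x, ρ x ∂μ) ≤ ε * 2⁻¹ ^ (Encodable.encode n + 1) ∧
      ∀ γ : Curve X, γ.In H → 1/((n.2.2.2:ℝ)+1) ≤ γ.len →
        ((n.2.1:ℝ≥0∞)+1)⁻¹ ≤ hPre ((n.2.2.1:ℝ≥0∞)+1)⁻¹ (f '' (γ.image ∩ (E ∩ Ei n.1))) →
        1 ≤ γ.integral ρ := by
    rintro ⟨i, q, s, l⟩
    refine stratum_rho μ H f hcont (E ∩ Ei i) (inter_subset_left.trans hEsub) ?_
      ((s:ℝ≥0∞)+1)⁻¹ ((q:ℝ≥0∞)+1)⁻¹ ?_ ?_ ?_ (1/((l:ℝ)+1)) (by positivity) _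
      (hweight ⟨i, q, s, l⟩) (hweighttop ⟨i, q, s, l⟩)
    · exact (hatH_mono inter_subset_right).trans_lt (hEifin i)
    · exact ENNReal.inv_pos.2 (ENNReal.add_ne_top.2 ⟨ENNReal.natCast_ne_top s, by norm_num⟩)
    · exact ENNReal.inv_pos.2 (ENNReal.add_ne_top.2 ⟨ENNReal.natCast_ne_top q, by norm_num⟩)
    · exact ENNReal.inv_lt_top.2 (lt_of_lt_of_le zero_lt_one le_add_self)
  choose ρn hρmeas hρnorm hρadm using hstrata
  -- the global admissible function
  refine iInf_le_of_le (fun x => ∑' n : ι, ρn n x) (iInf_le_of_le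
    (Measurable.ennreal_tsum hρmeas) (iInf_le_of_le ?_ ?_))
  · -- admissibility
    rintro γ ⟨hγH, hγpos⟩
    -- positive length
    have hlen : 0 < γ.len := by
      rcases lt_or_eq_of_le γ.len_nonneg with h | h
      · exact h
      · exfalso
        have himg : γ.image = {γ.toFun 0} := by
          rw [Curve.image, ← h, Set.Icc_self, Set.image_singleton]
        have hsub2 : f '' (γ.image ∩ E) ⊆ {f (γ.toFun 0)} := by
          rw [himg]
          intro y hy
          obtain ⟨z, hz, rfl⟩ := hy
          rw [hz.1]
          rfl
        have : μH[1] (f '' (γ.image ∩ E)) = 0 := by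
          refine le_antisymm ?_ (zero_le)
          refine le_trans (MeasureTheory.measure_mono hsub2) ?_
          rw [(show NullSingletonClass (μH[1] : MeasureTheory.Measure Y) from MeasureTheory.Measure.noAtoms_hausdorff Y one_pos).measure_singleton]
        exact hγpos.ne' this
    -- choose a piece i
    have hiex : ∃ i, 0 < μH[1] (f '' (γ.image ∩ (E ∩ Ei i))) := by
      by_contra hno
      push_neg at hno
      have h0 : ∀ i, μH[1] (f '' (γ.image ∩ (E ∩ Ei i))) = 0 := fun i =>
        le_antisymm (hno i) (zero_le)
      have hsub3 : f '' (γ.image ∩ E) ⊆ ⋃ i, f '' (γ.image ∩ (E ∩ Ei i)) := by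
        rw [← image_iUnion]
        apply image_mono
        intro z hz
        obtain ⟨i, hi⟩ := mem_iUnion.1 (hEsubU hz.2)
        exact mem_iUnion.2 ⟨i, hz.1, hz.2, hi⟩
      have : μH[1] (f '' (γ.image ∩ E)) = 0 := by
        refine le_antisymm ?_ (zero_le)
        refine le_trans (MeasureTheory.measure_mono hsub3) ?_
        refine le_trans (MeasureTheory.measure_iUnion_le _) ?_
        simp [h0]
      exact hγpos.ne' this
    obtain ⟨i, hi⟩ := hiex
    -- choose a gauge s
    obtain ⟨r, hr0, hrpos⟩ := exists_hPre_pos hi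
    have hsex : ∃ s : ℕ, ((s:ℝ≥0∞)+1)⁻¹ ≤ r := by
      rcases eq_or_ne r ⊤ with hrt | hrt
      · exact ⟨0, by rw [hrt]; exact le_top⟩
      · obtain ⟨s, hs⟩ := ENNReal.exists_inv_nat_lt hr0.ne'
        refine ⟨s, le_trans ?_ hs.le⟩
        exact ENNReal.inv_le_inv.2 (by exact_mod_cast Nat.le_succ s)
    obtain ⟨s, hs⟩ := hsex
    have hpres : 0 < hPre ((s:ℝ≥0∞)+1)⁻¹ (f '' (γ.image ∩ (E ∩ Ei i))) :=
      lt_of_lt_of_le hrpos (hPre_anti hs)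
    -- choose a level q
    have hqex : ∃ q : ℕ, ((q:ℝ≥0∞)+1)⁻¹ ≤
        hPre ((s:ℝ≥0∞)+1)⁻¹ (f '' (γ.image ∩ (E ∩ Ei i))) := by
      rcases eq_or_ne (hPre ((s:ℝ≥0∞)+1)⁻¹ (f '' (γ.image ∩ (E ∩ Ei i)))) ⊤ with hpt | hpt
      · exact ⟨0, by rw [hpt]; exact le_top⟩
      · obtain ⟨q, hq⟩ := ENNReal.exists_inv_nat_lt hpres.ne'
        refine ⟨q, le_trans ?_ hq.le⟩
        exact ENNReal.inv_le_inv.2 (by exact_mod_cast Nat.le_succ q)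
    obtain ⟨q, hq⟩ := hqex
    -- choose a length bound l
    obtain ⟨l, hl⟩ := exists_nat_one_div_lt hlen
    have hadm := hρadm ⟨i, q, s, l⟩ γ hγH hl.le hq
    refine le_trans hadm ?_
    refine MeasureTheory.lintegral_mono fun x => ?_
    exact ENNReal.le_tsum _
  · -- norm
    rw [MeasureTheory.lintegral_tsum (fun n => (hρmeas n).aemeasurable)]
    refine le_trans (ENNReal.tsum_le_tsum hρnorm) ?_
    have hinj := ENNReal.summable.tsum_le_tsum_of_inj (fun n : ι => Encodable.encode n)
      Encodable.encode_injective
      (f := fun n : ι => ε * 2⁻¹ ^ (Encodable.encode n + 1))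
      (g := fun k : ℕ => ε * 2⁻¹ ^ (k + 1))
      (fun c _ => zero_le) (fun n => le_rfl) ENNReal.summable
    exact le_trans hinj (weights_sum ε).le
end
end

section
/- Let (X,d,μ) be a metric measure space and let A ⊂ X. If Ĥ(A) < ∞, then μ(A) = 0. Consequently, every set of σ-finite Ĥ-measure has μ-measure zero (and in particular is μ-measurable). -/
open MeasureTheory Metric Set Filter ENNReal Topology

noncomputable section

lemma hatH_key_null {X : Type*} [MetricSpace X] [MeasurableSpace X] [BorelSpace X]
    (μ : Measure X) (B : Set X) (h : hatH μ B < ⊤) : μ B = 0 := by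
  set K := hatH μ B + 1 with hK
  have hKne : K ≠ ⊤ := by
    simp only [hK, Ne, ENNReal.add_eq_top, ENNReal.one_ne_top, or_false]
    exact h.ne
  have hbound : ∀ R : ℝ, 0 < R → μ B ≤ ENNReal.ofReal R * K := by
    intro R hR
    have h1 : hatHContent μ R B ≤ hatH μ B := by
      refine le_iSup₂ (f := fun (R : ℝ) (_ : 0 < R) => hatHContent μ R B) R hR
    have h2 : hatHContent μ R B < K := lt_of_le_of_lt h1 (by
      simp only [hK]
      exact ENNReal.lt_add_right h.ne one_ne_zero)
    rw [hatHContent] at h2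
    simp only [iInf_lt_iff] at h2
    obtain ⟨c, r, ⟨hrR, hcov⟩, hsum⟩ := h2
    calc μ B ≤ μ (⋃ j, ball (c j) (r j)) := measure_mono hcov
      _ ≤ ∑' j, μ (ball (c j) (r j)) := measure_iUnion_le _
      _ ≤ ∑' j, ENNReal.ofReal R * (μ (ball (c j) (2 * r j)) / ENNReal.ofReal (r j)) := by
          refine ENNReal.tsum_le_tsum fun j => ?_
          by_cases hrj : 0 < r j
          · have hmono : μ (ball (c j) (r j)) ≤ μ (ball (c j) (2 * r j)) :=
              measure_mono (ball_subset_ball (by linarith))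
            refine hmono.trans ?_
            have hrne : ENNReal.ofReal (r j) ≠ 0 := by
              simp only [Ne, ENNReal.ofReal_eq_zero, not_le]; exact hrj
            calc μ (ball (c j) (2 * r j))
                = μ (ball (c j) (2 * r j)) / ENNReal.ofReal (r j) * ENNReal.ofReal (r j) :=
                  (ENNReal.div_mul_cancel hrne ENNReal.ofReal_ne_top).symm
              _ ≤ μ (ball (c j) (2 * r j)) / ENNReal.ofReal (r j) * ENNReal.ofReal R := by
                  gcongr
                  exact hrR j
              _ = ENNReal.ofReal R * (μ (ball (c j) (2 * r j)) / ENNReal.ofReal (r j)) :=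
                  mul_comm _ _
          · have hemp : ball (c j) (r j) = ∅ := ball_eq_empty.mpr (le_of_not_gt hrj)
            simp [hemp]
      _ = ENNReal.ofReal R * ∑' j, μ (ball (c j) (2 * r j)) / ENNReal.ofReal (r j) :=
          ENNReal.tsum_mul_left
      _ ≤ ENNReal.ofReal R * K := mul_le_mul_right hsum.le _
  have htend : Tendsto (fun R : ℝ => ENNReal.ofReal R * K) (𝓝[>] (0:ℝ)) (𝓝 0) := by
    have h0 : Tendsto (fun R : ℝ => ENNReal.ofReal R) (𝓝[>] (0:ℝ)) (𝓝 0) := by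
      have := (ENNReal.continuous_ofReal.tendsto 0).mono_left
        (nhdsWithin_le_nhds (s := Set.Ioi (0:ℝ)))
      simpa using this
    simpa using ENNReal.Tendsto.mul_const h0 (Or.inr hKne)
  have hle : μ B ≤ 0 :=
    ge_of_tendsto htend (eventually_nhdsWithin_of_forall fun R hR => hbound R hR)
  exact le_zero_iff.mp hle

/-- A set with finite `Ĥ`-measure has zero `μ`-measure; consequently, a set of σ-finite
`Ĥ`-measure has zero `μ`-measure and in particular is `μ`-measurable. -/
theorem hatH_finite_implies_null
    {X : Type*} [MetricSpace X] [MeasurableSpace X] [BorelSpace X]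
    (μ : Measure X) (hμfin : FiniteOnBalls μ) (A : Set X) :
    (hatH μ A < ⊤ → μ A = 0) ∧
      (SigmaFiniteSet (hatH μ) A → μ A = 0 ∧ NullMeasurableSet A μ) := by
  refine ⟨fun h => hatH_key_null μ A h, fun ⟨E, hAE, hE⟩ => ?_⟩
  have hμA : μ A = 0 := by
    refine measure_mono_null hAE ?_
    exact measure_iUnion_null fun i => hatH_key_null μ (E i) (hE i)
  exact ⟨hμA, NullMeasurableSet.of_null hμA⟩
end
end
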